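/- arXiv:1712.08892 — 3 statements merged into one kernel-verified Lean document; each statement's English description precedes it below -/
import Mathlib

section
/- Assume hypothesis (H). Let (k_n) be a sequence with k_n → ∞ and k_n = o(n) as n → ∞. Then there exist a constant C₃ > 0 and N such that for all n ≥ N, P(Z_n ≤ k_n) ≤ C₃·(1 + γ·n/k_n)^(−σ). -/
open MeasureTheory ProbabilityTheory Filter Real Set
open scoped ENNReal Topology

/-- Probability generating function of a distribution `c` on `ℕ`. -/
noncomputable def pgf (c : ℕ → ℝ) (x : ℝ) : ℝ := ∑' j : ℕ, c j * x ^ j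

/-- Generating function `H_n` of the critical GWI process:
`H_n(x) = ∏_{m=0}^{n-1} B(A_m(x))`. -/
noncomputable def Hgen (a b : ℕ → ℝ) (n : ℕ) (x : ℝ) : ℝ :=
  ∏ m ∈ Finset.range n, pgf b ((pgf a)^[m] x)

/-!
The generating function of `Z n` is `Hgen a b n x = ∏_{m<n} B (A^[m] x)`, so Chernoff's bound at
`x = 1 - 1/(2k)` gives `P(Z n ≤ k) ≤ 2 Hgen a b n (1 - 1/(2k))`.

Put `S m = 1 - A^[m] (1 - s)`. Criticality and the second moment of `A` give
`S m - γ S m ^ 2 ≤ S (m + 1) ≤ S m - a_J S m ^ 2` for some `J ≥ 2`, so `S m ≤ s / (1 + a_J m s)`,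
`∑ S m ^ 2 = O(s)`, and `1 / S m ≤ 1 / s + γ m + 2 γ² ∑_{j<m} S j`. By Cauchy–Schwarz the last
sum is `O(√(1 + γ m s))`, so `S m ≥ s / (1 + γ m s) - O(s² (1 + γ m s) ^ (-3/2))` and
`∑_{m<n} S m ≥ γ⁻¹ log (1 + γ n s) - O(s)`. Finally `Hgen a b n (1 - s) = ∏_{m<n} B (1 - S m)`
and `B (1 - t) ≤ exp (-β t + O(t²))`, so `Hgen a b n (1 - s) ≤ C (1 + γ n s) ^ (-β/γ)`.
-/

lemma one_sub_pow_le_quadratic {s : ℝ} (hs0 : 0 ≤ s) (hs1 : s ≤ 1) (j : ℕ) :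
    (1 - s) ^ j ≤ 1 - j * s + j * (j - 1) / 2 * s ^ 2 := by
  induction j with
  | zero => simp
  | succ j ih =>
    have hbern : 1 - j * s ≤ (1 - s) ^ j := by
      simpa [sub_eq_add_neg] using one_add_mul_le_pow (a := -s) (by linarith) j
    rw [pow_succ]
    push_cast
    nlinarith [mul_le_mul_of_nonneg_right ih (by linarith : (0 : ℝ) ≤ 1 - s)]

lemma one_sub_mul_add_sq_le_pow {s : ℝ} (hs1 : s ≤ 1) {J : ℕ} (hJ : 2 ≤ J) :
    1 - J * s + s ^ 2 ≤ (1 - s) ^ J := by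
  obtain ⟨d, rfl⟩ : ∃ d, J = d + 2 := ⟨J - 2, by omega⟩
  have hbern : 1 - d * s ≤ (1 - s) ^ d := by
    simpa [sub_eq_add_neg] using one_add_mul_le_pow (a := -s) (by linarith) d
  rw [pow_add]
  push_cast
  nlinarith [mul_le_mul_of_nonneg_right hbern (sq_nonneg (1 - s)),
    mul_nonneg (mul_nonneg (Nat.cast_nonneg d : (0 : ℝ) ≤ d) (sq_nonneg s)) (sub_nonneg.2 hs1)]

section Pgf

variable {c : ℕ → ℝ}

lemma summable_mul_pow (hc : ∀ j, 0 ≤ c j) (hc1 : HasSum c 1) {x : ℝ} (hx0 : 0 ≤ x)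
    (hx1 : x ≤ 1) : Summable (fun j => c j * x ^ j) :=
  hc1.summable.of_nonneg_of_le (fun j => mul_nonneg (hc j) (pow_nonneg hx0 j))
    (fun j => mul_le_of_le_one_right (hc j) (pow_le_one₀ hx0 hx1))

lemma pgf_nonneg (hc : ∀ j, 0 ≤ c j) {x : ℝ} (hx0 : 0 ≤ x) : 0 ≤ pgf c x :=
  tsum_nonneg fun j => mul_nonneg (hc j) (pow_nonneg hx0 j)

lemma hasSum_one_sub_pgf (hc : ∀ j, 0 ≤ c j) (hc1 : HasSum c 1) {x : ℝ} (hx0 : 0 ≤ x)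
    (hx1 : x ≤ 1) : HasSum (fun j => c j * (1 - x ^ j)) (1 - pgf c x) := by
  simpa only [mul_sub, mul_one, pgf] using hc1.sub (summable_mul_pow hc hc1 hx0 hx1).hasSum

lemma pgf_le_one (hc : ∀ j, 0 ≤ c j) (hc1 : HasSum c 1) {x : ℝ} (hx0 : 0 ≤ x) (hx1 : x ≤ 1) :
    pgf c x ≤ 1 :=
  sub_nonneg.1 <| (hasSum_one_sub_pgf hc hc1 hx0 hx1).nonneg fun j =>
    mul_nonneg (hc j) (sub_nonneg.2 (pow_le_one₀ hx0 hx1))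

lemma one_sub_one_sub_pow_le {s : ℝ} (hs1 : s ≤ 2) (j : ℕ) : 1 - (1 - s) ^ j ≤ j * s := by
  have := one_add_mul_le_pow (a := -s) (by linarith) j
  rw [← sub_eq_add_neg] at this
  linarith

lemma sub_le_one_sub_pgf_one_sub (hc : ∀ j, 0 ≤ c j) (hc1 : HasSum c 1) {μ₁ v : ℝ}
    (hμ₁ : HasSum (fun j => c j * j) μ₁) (hv : HasSum (fun j => c j * (j * (j - 1))) (2 * v))
    {s : ℝ} (hs0 : 0 ≤ s) (hs1 : s ≤ 1) :
    μ₁ * s - v * s ^ 2 ≤ 1 - pgf c (1 - s) := by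
  have := hasSum_le (fun j => ?_) ((hμ₁.mul_right s).sub (hv.mul_right (s ^ 2 / 2)))
    (hasSum_one_sub_pgf (x := 1 - s) hc hc1 (by linarith) (by linarith))
  · linarith
  have := mul_le_mul_of_nonneg_left (one_sub_pow_le_quadratic hs0 hs1 j) (hc j)
  linarith

lemma one_sub_pgf_one_sub_le_sub (hc : ∀ j, 0 ≤ c j) (hc1 : HasSum c 1)
    (hμ₁ : HasSum (fun j => c j * j) 1) {J : ℕ} (hJ : 2 ≤ J) {s : ℝ} (hs0 : 0 ≤ s)
    (hs1 : s ≤ 1) : 1 - pgf c (1 - s) ≤ s - c J * s ^ 2 := by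
  have hgap : HasSum (fun j => c j * j * s - c j * (1 - (1 - s) ^ j))
      (s - (1 - pgf c (1 - s))) := by
    simpa only [one_mul] using
      (hμ₁.mul_right s).sub (hasSum_one_sub_pgf (x := 1 - s) hc hc1 (by linarith) (by linarith))
  have hJgap := le_hasSum hgap J fun j _ => by
    rw [mul_assoc, ← mul_sub]
    exact mul_nonneg (hc j) (sub_nonneg.2 (one_sub_one_sub_pow_le (by linarith) j))
  have := mul_le_mul_of_nonneg_left (one_sub_mul_add_sq_le_pow hs1 hJ) (hc J)
  linarith

lemma Hgen_nonneg {a b : ℕ → ℝ} (ha : ∀ j, 0 ≤ a j) (hb : ∀ j, 0 ≤ b j) (n : ℕ) {x : ℝ}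
    (hx0 : 0 ≤ x) : 0 ≤ Hgen a b n x := by
  have hiter (m : ℕ) : 0 ≤ (pgf a)^[m] x := by
    induction m with
    | zero => exact hx0
    | succ m ih => rw [Function.iterate_succ_apply']; exact pgf_nonneg ha ih
  exact Finset.prod_nonneg fun m _ => pgf_nonneg hb (hiter m)

end Pgf

lemma summable_mul_sq_of_summable_mul_sq_mul_log {c : ℕ → ℝ} (hc : ∀ j, 0 ≤ c j)
    (h : Summable fun j : ℕ => c j * j ^ 2 * Real.log j) : Summable fun j : ℕ => c j * j ^ 2 := by
  refine Summable.of_norm_bounded_eventually_nat h ?_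
  filter_upwards [eventually_ge_atTop 3] with j hj
  have hlog : 1 ≤ Real.log j := by
    rw [Real.le_log_iff_exp_le (by positivity)]
    have : (3 : ℝ) ≤ j := by exact_mod_cast hj
    linarith [Real.exp_one_lt_d9]
  have hnonneg : 0 ≤ c j * j ^ 2 := mul_nonneg (hc j) (sq_nonneg _)
  rw [Real.norm_of_nonneg hnonneg]
  exact le_mul_of_one_le_right hnonneg hlog

lemma summable_mul_of_summable_mul_sq {c : ℕ → ℝ} (hc : ∀ j, 0 ≤ c j)
    (h : Summable fun j : ℕ => c j * j ^ 2) : Summable fun j : ℕ => c j * j :=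
  h.of_nonneg_of_le (fun j => mul_nonneg (hc j) j.cast_nonneg) fun j =>
    mul_le_mul_of_nonneg_left (by exact_mod_cast Nat.le_self_pow two_ne_zero j) (hc j)

lemma summable_mul_mul_sub_one {c : ℕ → ℝ} (h2 : Summable fun j : ℕ => c j * j ^ 2)
    (h1 : Summable fun j : ℕ => c j * j) : Summable fun j : ℕ => c j * (j * (j - 1)) :=
  (h2.sub h1).congr fun j => by ring

section Telescoping

variable {e s : ℝ}

lemma log_one_add_mul_div_le_sum (he : 0 < e) (hs : 0 ≤ s) (n : ℕ) :
    Real.log (1 + e * n * s) / e ≤ ∑ m ∈ Finset.range n, s / (1 + e * m * s) := by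
  have hstep (m : ℕ) : Real.log (1 + e * (m + 1 : ℕ) * s) - Real.log (1 + e * m * s)
      ≤ e * (s / (1 + e * m * s)) := by
    have hP : 0 < 1 + e * m * s := by positivity
    rw [← Real.log_div (by positivity) hP.ne']
    calc _ ≤ (1 + e * (m + 1 : ℕ) * s) / (1 + e * m * s) - 1 :=
          Real.log_le_sub_one_of_pos (by positivity)
      _ = _ := by field_simp; push_cast; ring
  have := Finset.sum_le_sum fun m (_ : m ∈ Finset.range n) => hstep m
  rw [Finset.sum_range_sub (fun m : ℕ => Real.log (1 + e * m * s)), ← Finset.mul_sum] at this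
  rw [div_le_iff₀ he]
  simpa [mul_comm] using this

lemma sq_div_mul_sqrt_le_sub (he : 0 < e) (hs : 0 ≤ s) (hes : e * s ≤ 1) (m : ℕ) :
    s ^ 2 / ((1 + e * m * s) * √(1 + e * m * s))
      ≤ 4 * s / e * (1 / √(1 + e * m * s) - 1 / √(1 + e * (m + 1 : ℕ) * s)) := by
  have hP : 1 ≤ 1 + e * m * s := le_add_of_nonneg_right (by positivity)
  set x := √(1 + e * m * s)
  set y := √(1 + e * (m + 1 : ℕ) * s)
  have hx2 : x ^ 2 = 1 + e * m * s := Real.sq_sqrt (by linarith)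
  have hy2 : y ^ 2 = x ^ 2 + e * s := by
    rw [hx2, Real.sq_sqrt (by positivity)]; push_cast; ring
  have hx1 : 1 ≤ x := Real.one_le_sqrt.2 hP
  have hxy : x ≤ y := Real.sqrt_le_sqrt (by push_cast; nlinarith)
  have hy0 : 0 < y := by linarith
  have hshape : (y + x) * y ≤ 4 * x ^ 2 := by nlinarith
  have hes' : e * s = (y - x) * (y + x) := by linear_combination -hy2
  rw [← hx2, div_le_iff₀ (by positivity),
    show 4 * s / e * (1 / x - 1 / y) * (x ^ 2 * x) = 4 * s * (y - x) * x ^ 2 / (e * y) by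
      field_simp, le_div_iff₀ (by positivity)]
  calc s ^ 2 * (e * y) = s * (y - x) * ((y + x) * y) := by linear_combination s * y * hes'
    _ ≤ s * (y - x) * (4 * x ^ 2) := by gcongr
    _ = _ := by ring

lemma sum_sq_div_mul_sqrt_le (he : 0 < e) (hs : 0 ≤ s) (hes : e * s ≤ 1) (n : ℕ) :
    ∑ m ∈ Finset.range n, s ^ 2 / ((1 + e * m * s) * √(1 + e * m * s)) ≤ 4 * s / e := by
  calc _ ≤ ∑ m ∈ Finset.range n,
        4 * s / e * (1 / √(1 + e * m * s) - 1 / √(1 + e * (m + 1 : ℕ) * s)) :=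
        Finset.sum_le_sum fun m _ => sq_div_mul_sqrt_le_sub he hs hes m
    _ = 4 * s / e * (1 - 1 / √(1 + e * n * s)) := by
        rw [← Finset.mul_sum, Finset.sum_range_sub' (fun m : ℕ => 1 / √(1 + e * m * s))]
        simp
    _ ≤ 4 * s / e := mul_le_of_le_one_right (by positivity) (by simp)

end Telescoping

def QuadraticStepBounds (f : ℝ → ℝ) (c γ s : ℝ) : Prop :=
  ∀ t ∈ Ioc 0 s, t - γ * t ^ 2 ≤ f t ∧ f t ≤ t - c * t ^ 2

namespace QuadraticStepBounds

variable {f : ℝ → ℝ} {c γ s : ℝ}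

lemma coeff_le (h : QuadraticStepBounds f c γ s) (hs : 0 < s) : c ≤ γ := by
  have := (h s ⟨hs, le_rfl⟩).1.trans (h s ⟨hs, le_rfl⟩).2
  exact le_of_mul_le_mul_right (by linarith : c * s ^ 2 ≤ γ * s ^ 2) (by positivity)

lemma iterate_mem_Ioc (h : QuadraticStepBounds f c γ s) (hc : 0 ≤ c) (hs : 0 < s)
    (hγs : γ * s ≤ 1 / 2) (m : ℕ) : f^[m] s ∈ Ioc 0 s := by
  induction m with
  | zero => exact ⟨hs, le_rfl⟩
  | succ m ih =>
    obtain ⟨ht0, hts⟩ := ih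
    obtain ⟨hlow, hup⟩ := h _ ⟨ht0, hts⟩
    have hγt : γ * f^[m] s ≤ 1 / 2 := by
      have := (h.coeff_le hs).trans' hc
      nlinarith
    rw [Function.iterate_succ_apply']
    constructor <;> nlinarith

lemma iterate_le (h : QuadraticStepBounds f c γ s) (hc : 0 ≤ c) (hs : 0 < s)
    (hγs : γ * s ≤ 1 / 2) (m : ℕ) : f^[m] s ≤ s / (1 + c * m * s) := by
  have hinv (m : ℕ) : 1 / s + c * m ≤ 1 / f^[m] s := by
    induction m with
    | zero => simp
    | succ m ih =>
      obtain ⟨ht0, hts⟩ := h.iterate_mem_Ioc hc hs hγs m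
      obtain ⟨hft0, -⟩ := h.iterate_mem_Ioc hc hs hγs (m + 1)
      rw [Function.iterate_succ_apply'] at hft0 ⊢
      have hup := (h _ ⟨ht0, hts⟩).2
      have hstep : 1 / f^[m] s + c ≤ 1 / f (f^[m] s) := by
        rw [div_add' _ _ _ ht0.ne', div_le_div_iff₀ ht0 hft0]
        nlinarith [mul_le_mul_of_nonneg_left hup (by positivity : 0 ≤ 1 + c * f^[m] s),
          mul_nonneg (sq_nonneg c) (pow_nonneg ht0.le 3)]
      push_cast
      linarith
  have hpos := (h.iterate_mem_Ioc hc hs hγs m).1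
  calc f^[m] s = 1 / (1 / f^[m] s) := (one_div_one_div _).symm
    _ ≤ 1 / (1 / s + c * m) := one_div_le_one_div_of_le (by positivity) (hinv m)
    _ = s / (1 + c * m * s) := by field_simp

lemma sum_iterate_sq_le (h : QuadraticStepBounds f c γ s) (hc : 0 < c) (hs : 0 < s)
    (hγs : γ * s ≤ 1 / 2) (n : ℕ) : ∑ m ∈ Finset.range n, (f^[m] s) ^ 2 ≤ 4 * s / c := by
  have hcs : c * s ≤ 1 := by nlinarith [h.coeff_le hs]
  refine le_trans (Finset.sum_le_sum fun m _ => ?_) (sum_sq_div_mul_sqrt_le hc hs.le hcs n)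
  have hP : 1 ≤ 1 + c * m * s := le_add_of_nonneg_right (by positivity)
  have hsqrt : √(1 + c * m * s) ≤ 1 + c * m * s := Real.sqrt_le_self_iff.2 (Or.inr hP)
  calc (f^[m] s) ^ 2 ≤ (s / (1 + c * m * s)) ^ 2 :=
        pow_le_pow_left₀ (h.iterate_mem_Ioc hc.le hs hγs m).1.le (h.iterate_le hc.le hs hγs m) 2
    _ = s ^ 2 / ((1 + c * m * s) * (1 + c * m * s)) := by rw [div_pow, sq (1 + _)]
    _ ≤ s ^ 2 / ((1 + c * m * s) * √(1 + c * m * s)) := by gcongr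

lemma inv_iterate_le (h : QuadraticStepBounds f c γ s) (hc : 0 ≤ c) (hs : 0 < s)
    (hγs : γ * s ≤ 1 / 2) (m : ℕ) :
    1 / f^[m] s ≤ 1 / s + γ * m + 2 * γ ^ 2 * ∑ j ∈ Finset.range m, f^[j] s := by
  induction m with
  | zero => simp
  | succ m ih =>
    obtain ⟨ht0, hts⟩ := h.iterate_mem_Ioc hc hs hγs m
    have hlow := (h _ ⟨ht0, hts⟩).1
    have hγt : γ * f^[m] s ≤ 1 / 2 := by nlinarith [(h.coeff_le hs).trans' hc]
    have hstep : 1 / f (f^[m] s) ≤ 1 / f^[m] s + γ + 2 * γ ^ 2 * f^[m] s := by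
      set t := f^[m] s
      have hft : 0 < f t := by nlinarith
      rw [div_le_iff₀ hft, show 1 / t + γ + 2 * γ ^ 2 * t = (1 + γ * t + 2 * (γ * t) ^ 2) / t by
        field_simp, div_mul_eq_mul_div, le_div_iff₀ ht0]
      nlinarith [mul_le_mul_of_nonneg_left hlow
        (by nlinarith : (0 : ℝ) ≤ 1 + γ * t + 2 * (γ * t) ^ 2),
        mul_nonneg (mul_nonneg (sq_nonneg (γ * t)) (by linarith : (0 : ℝ) ≤ 1 - 2 * (γ * t)))
          ht0.le]
    rw [Function.iterate_succ_apply', Finset.sum_range_succ]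
    push_cast
    linarith

lemma sum_iterate_le (h : QuadraticStepBounds f c γ s) (hc : 0 < c) (hs : 0 < s)
    (hγs : γ * s ≤ 1 / 2) (m : ℕ) :
    ∑ j ∈ Finset.range m, f^[j] s ≤ 2 * √(1 + γ * m * s) / √(γ * c) := by
  have hγ : 0 < γ := hc.trans_le (h.coeff_le hs)
  have hnonneg : 0 ≤ ∑ j ∈ Finset.range m, f^[j] s :=
    Finset.sum_nonneg fun j _ => (h.iterate_mem_Ioc hc.le hs hγs j).1.le
  refine (pow_le_pow_iff_left₀ hnonneg (by positivity) two_ne_zero).1 ?_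
  rw [div_pow, mul_pow, Real.sq_sqrt (by positivity), Real.sq_sqrt (by positivity)]
  calc _ ≤ m * ∑ j ∈ Finset.range m, (f^[j] s) ^ 2 := by
        simpa using sq_sum_le_card_mul_sum_sq (s := Finset.range m) (f := fun j => f^[j] s)
    _ ≤ m * (4 * s / c) := by gcongr; exact h.sum_iterate_sq_le hc hs hγs m
    _ ≤ 2 ^ 2 * (1 + γ * m * s) / (γ * c) := by
        rw [mul_div_assoc', div_le_div_iff₀ hc (by positivity)]
        nlinarith

lemma div_sub_le_iterate (h : QuadraticStepBounds f c γ s) (hc : 0 < c) (hs : 0 < s)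
    (hγs : γ * s ≤ 1 / 2) (m : ℕ) :
    s / (1 + γ * m * s) - 4 * γ ^ 2 / √(γ * c) * (s ^ 2 / ((1 + γ * m * s) * √(1 + γ * m * s)))
      ≤ f^[m] s := by
  have hγ : 0 < γ := hc.trans_le (h.coeff_le hs)
  have hE := h.inv_iterate_le hc.le hs hγs m
  have hEle := mul_le_mul_of_nonneg_left (h.sum_iterate_le hc hs hγs m)
    (by positivity : 0 ≤ 2 * γ ^ 2)
  have hS := (h.iterate_mem_Ioc hc.le hs hγs m).1
  set P := 1 + γ * m * s
  set E := 2 * γ ^ 2 * ∑ j ∈ Finset.range m, f^[j] s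
  have hP : 1 ≤ P := le_add_of_nonneg_right (by positivity)
  have hE0 : 0 ≤ E := mul_nonneg (by positivity)
    (Finset.sum_nonneg fun j _ => (h.iterate_mem_Ioc hc.le hs hγs j).1.le)
  have hX : 1 / s + γ * m = P / s := by simp only [P]; field_simp
  rw [hX] at hE
  have h1 : 1 / (P / s + E) ≤ f^[m] s := by
    simpa using one_div_le_one_div_of_le (by positivity) hE
  have h2 : s / P - E * (s ^ 2 / P ^ 2) ≤ 1 / (P / s + E) := by
    rw [le_div_iff₀ (by positivity),
      show (s / P - E * (s ^ 2 / P ^ 2)) * (P / s + E) = 1 - (E * s / P) ^ 2 by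
        field_simp; ring]
    nlinarith [sq_nonneg (E * s / P)]
  have h3 : E * (s ^ 2 / P ^ 2) ≤ 4 * γ ^ 2 / √(γ * c) * (s ^ 2 / (P * √P)) := by
    have hsqrtP : 0 < √P := Real.sqrt_pos.2 (by linarith)
    calc E * (s ^ 2 / P ^ 2) ≤ 2 * γ ^ 2 * (2 * √P / √(γ * c)) * (s ^ 2 / P ^ 2) := by
          gcongr
      _ = 4 * γ ^ 2 / √(γ * c) * (s ^ 2 / (P * √P)) := by
          rw [show P ^ 2 = P * √P * √P by rw [mul_assoc, Real.mul_self_sqrt (by linarith)]; ring]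
          field_simp
          ring
  linarith

lemma log_div_sub_le_sum_iterate (h : QuadraticStepBounds f c γ s) (hc : 0 < c) (hs : 0 < s)
    (hγs : γ * s ≤ 1 / 2) (n : ℕ) :
    Real.log (1 + γ * n * s) / γ - 16 * γ * s / √(γ * c) ≤ ∑ m ∈ Finset.range n, f^[m] s := by
  have hγ : 0 < γ := hc.trans_le (h.coeff_le hs)
  have hsum := Finset.sum_le_sum fun m (_ : m ∈ Finset.range n) =>
    h.div_sub_le_iterate hc hs hγs m
  rw [Finset.sum_sub_distrib, ← Finset.mul_sum] at hsum
  have hcorr := mul_le_mul_of_nonneg_left (sum_sq_div_mul_sqrt_le hγ hs.le (by linarith) n)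
    (by positivity : 0 ≤ 4 * γ ^ 2 / √(γ * c))
  have hconst : 4 * γ ^ 2 / √(γ * c) * (4 * s / γ) = 16 * γ * s / √(γ * c) := by
    field_simp; ring
  linarith [log_one_add_mul_div_le_sum hγ hs.le n]

end QuadraticStepBounds

lemma natCast_mul_natCast_sub_one_nonneg (j : ℕ) : 0 ≤ (j : ℝ) * (j - 1) := by
  rcases j with _ | j <;> push_cast <;> nlinarith

lemma exists_two_le_pos_of_hasSum {c : ℕ → ℝ} (hc : ∀ j, 0 ≤ c j) {q : ℝ}
    (hq : HasSum (fun j => c j * (j * (j - 1))) q) (hq0 : 0 < q) : ∃ J, 2 ≤ J ∧ 0 < c J := by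
  by_contra! hcJ
  have hzero : ∀ j, c j * (j * (j - 1)) = 0 := fun j => by
    rcases lt_or_ge j 2 with hj | hj
    · interval_cases j <;> simp
    · simp [le_antisymm (hcJ j hj) (hc j)]
  exact hq0.ne' (hq.unique (by simp [hzero]))

lemma iterate_pgf_one_sub (a : ℕ → ℝ) (s : ℝ) (m : ℕ) :
    (pgf a)^[m] (1 - s) = 1 - (fun t => 1 - pgf a (1 - t))^[m] s :=
  ((Function.Semiconj.iterate_right (f := fun t : ℝ => 1 - t) (fun t => by simp) m) s).symm

lemma pgf_one_sub_le_exp {b : ℕ → ℝ} (hb : ∀ j, 0 ≤ b j) (hb1 : HasSum b 1) {β δ : ℝ}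
    (hβ : HasSum (fun j => b j * j) β) (hδ : HasSum (fun j => b j * (j * (j - 1))) δ)
    {t : ℝ} (ht0 : 0 ≤ t) (ht1 : t ≤ 1) :
    pgf b (1 - t) ≤ Real.exp (-(β * t) + δ / 2 * t ^ 2) := by
  have := sub_le_one_sub_pgf_one_sub hb hb1 hβ (v := δ / 2) (by rwa [mul_div_cancel₀ _ two_ne_zero])
    ht0 ht1
  linarith [Real.add_one_le_exp (-(β * t) + δ / 2 * t ^ 2)]

lemma Hgen_one_sub_le_exp {a b : ℕ → ℝ} (hb : ∀ j, 0 ≤ b j) (hb1 : HasSum b 1) {β δ : ℝ}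
    (hβ : HasSum (fun j => b j * j) β) (hδ : HasSum (fun j => b j * (j * (j - 1))) δ)
    (n : ℕ) {s : ℝ} (hS : ∀ m, (fun t => 1 - pgf a (1 - t))^[m] s ∈ Icc 0 1) :
    Hgen a b n (1 - s) ≤ Real.exp (-(β * ∑ m ∈ Finset.range n, (fun t => 1 - pgf a (1 - t))^[m] s)
      + δ / 2 * ∑ m ∈ Finset.range n, ((fun t => 1 - pgf a (1 - t))^[m] s) ^ 2) := by
  rw [Hgen, Finset.mul_sum, Finset.mul_sum, ← Finset.sum_neg_distrib, ← Finset.sum_add_distrib,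
    Real.exp_sum]
  refine Finset.prod_le_prod (fun m _ => ?_) (fun m _ => ?_) <;> rw [iterate_pgf_one_sub]
  · exact pgf_nonneg hb (by linarith [(hS m).2])
  · exact pgf_one_sub_le_exp hb hb1 hβ hδ (hS m).1 (hS m).2

theorem Hgen_one_sub_le {a b : ℕ → ℝ} {γ β δ : ℝ} (ha : ∀ j, 0 ≤ a j) (ha1 : HasSum a 1)
    (hA1 : HasSum (fun j => a j * j) 1) (hA2 : HasSum (fun j => a j * (j * (j - 1))) (2 * γ))
    (hγ : 0 < γ) (hb : ∀ j, 0 ≤ b j) (hb1 : HasSum b 1) (hB1 : HasSum (fun j => b j * j) β)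
    (hB2 : HasSum (fun j => b j * (j * (j - 1))) δ) :
    ∃ C s₀ : ℝ, 0 < C ∧ 0 < s₀ ∧ ∀ (n : ℕ) (s : ℝ), 0 < s → s ≤ s₀ →
      Hgen a b n (1 - s) ≤ C * (1 + γ * n * s) ^ (-(β / γ)) := by
  obtain ⟨J, hJ, haJ⟩ := exists_two_le_pos_of_hasSum ha hA2 (by positivity)
  have hβ : 0 ≤ β := hB1.nonneg fun j => mul_nonneg (hb j) j.cast_nonneg
  have hδ : 0 ≤ δ / 2 := div_nonneg
    (hB2.nonneg fun j => mul_nonneg (hb j) (natCast_mul_natCast_sub_one_nonneg j)) zero_le_two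
  refine ⟨Real.exp (β * (16 * γ / √(γ * a J)) + δ / 2 * (4 / a J)), min 1 (1 / (2 * γ)),
    Real.exp_pos _, by positivity, fun n s hs hss₀ => ?_⟩
  have hs1 : s ≤ 1 := hss₀.trans (min_le_left _ _)
  have hγs : γ * s ≤ 1 / 2 := by
    have := hss₀.trans (min_le_right _ _)
    rw [le_div_iff₀ (by positivity)] at this
    linarith
  have hf : QuadraticStepBounds (fun t => 1 - pgf a (1 - t)) (a J) γ s := fun t ⟨ht0, hts⟩ =>
    ⟨by simpa using sub_le_one_sub_pgf_one_sub ha ha1 hA1 hA2 ht0.le (hts.trans hs1),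
      one_sub_pgf_one_sub_le_sub ha ha1 hA1 hJ ht0.le (hts.trans hs1)⟩
  have hS m := Ioc_subset_Icc_self (Ioc_subset_Ioc_right hs1 (hf.iterate_mem_Ioc haJ.le hs hγs m))
  have hlow := mul_le_mul_of_nonneg_left (hf.log_div_sub_le_sum_iterate haJ hs hγs n) hβ
  have hsq := mul_le_mul_of_nonneg_left (hf.sum_iterate_sq_le haJ hs hγs n) hδ
  have hsβ : 16 * γ * s / √(γ * a J) ≤ 16 * γ / √(γ * a J) := by
    rw [mul_div_right_comm]; exact mul_le_of_le_one_right (by positivity) hs1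
  have hsδ : 4 * s / a J ≤ 4 / a J := by
    rw [mul_div_right_comm]; exact mul_le_of_le_one_right (by positivity) hs1
  rw [Real.rpow_def_of_pos (by positivity), ← Real.exp_add]
  refine (Hgen_one_sub_le_exp hb hb1 hB1 hB2 n hS).trans (Real.exp_le_exp.2 ?_)
  rw [mul_sub] at hlow
  have hlog : β * (Real.log (1 + γ * n * s) / γ) = -(Real.log (1 + γ * n * s) * -(β / γ)) := by
    ring
  linarith [mul_le_mul_of_nonneg_left hsβ hβ, mul_le_mul_of_nonneg_left hsδ hδ]

lemma measurable_sum_range_comp {Ω : Type*} {_ : MeasurableSpace Ω} {N : Ω → ℕ} {g : ℕ → Ω → ℕ}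
    (hN : Measurable N) (hg : ∀ i, Measurable (g i)) :
    Measurable fun ω => ∑ i ∈ Finset.range (N ω), g i ω :=
  (measurable_from_prod_countable_right (f := fun p : ℕ × Ω => ∑ i ∈ Finset.range p.1, g i p.2)
    fun m => Finset.measurable_sum (Finset.range m) fun i _ => hg i).comp (hN.prodMk measurable_id)

section Probability

variable {Ω : Type*} [MeasurableSpace Ω] {μ : Measure Ω}

lemma lintegral_comp_eq_tsum {w : Ω → ℕ} (hw : Measurable w) (φ : ℕ → ℝ≥0∞) :
    ∫⁻ ω, φ (w ω) ∂μ = ∑' m, φ m * μ {ω | w ω = m} := by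
  rw [← lintegral_map (measurable_of_countable φ) hw, lintegral_countable']
  congr with m
  rw [Measure.map_apply hw (measurableSet_singleton m)]
  rfl

lemma nonneg_and_hasSum_one_of_measure_eq [IsProbabilityMeasure μ] {w : Ω → ℕ}
    (hw : Measurable w) {c : ℕ → ℝ} (hc : ∀ j, (μ {ω | w ω = j}).toReal = c j) :
    (∀ j, 0 ≤ c j) ∧ HasSum c 1 := by
  refine ⟨fun j => hc j ▸ ENNReal.toReal_nonneg, ?_⟩
  have htotal : ∑' j, μ {ω | w ω = j} = 1 := by
    simpa using (lintegral_comp_eq_tsum (μ := μ) hw (fun _ => 1)).symm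
  have := ENNReal.hasSum_toReal (htotal ▸ ENNReal.one_ne_top)
  rwa [← ENNReal.tsum_toReal_eq (fun _ => measure_ne_top _ _), htotal, ENNReal.toReal_one,
    funext hc] at this

lemma lintegral_ofReal_pow_eq_pgf [IsProbabilityMeasure μ] {w : Ω → ℕ} (hw : Measurable w)
    {c : ℕ → ℝ} (hc : ∀ j, (μ {ω | w ω = j}).toReal = c j) {x : ℝ} (hx0 : 0 ≤ x)
    (hx1 : x ≤ 1) : ∫⁻ ω, ENNReal.ofReal x ^ w ω ∂μ = ENNReal.ofReal (pgf c x) := by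
  obtain ⟨hc0, hc1⟩ := nonneg_and_hasSum_one_of_measure_eq hw hc
  rw [lintegral_comp_eq_tsum hw, pgf, ENNReal.ofReal_tsum_of_nonneg
    (fun j => mul_nonneg (hc0 j) (pow_nonneg hx0 j)) (summable_mul_pow hc0 hc1 hx0 hx1)]
  congr with j
  rw [← hc j, ENNReal.ofReal_mul ENNReal.toReal_nonneg, ENNReal.ofReal_toReal (measure_ne_top _ _),
    ENNReal.ofReal_pow hx0, mul_comm]

end Probability

section GaltonWatsonImmigration

variable {Ω : Type*} {X : ℕ → ℕ → Ω → ℕ} {Y : ℕ → Ω → ℕ} {Z : ℕ → Ω → ℕ}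

/-- `Sum.inl (n, i)` indexes `X n i` and `Sum.inr n` indexes `Y n`; both lie in generation `n`. -/
def generation : (ℕ × ℕ) ⊕ ℕ → ℕ := Sum.elim Prod.fst id

variable (X Y) in
abbrev generationsSigma (T : Set ℕ) : MeasurableSpace Ω :=
  ⨆ i ∈ generation ⁻¹' T,
    MeasurableSpace.comap (Sum.elim (fun p : ℕ × ℕ => X p.1 p.2) Y i) inferInstance

lemma measurable_generationsSigma {T : Set ℕ} {i : (ℕ × ℕ) ⊕ ℕ} (hi : generation i ∈ T) :
    Measurable[generationsSigma X Y T] (Sum.elim (fun p : ℕ × ℕ => X p.1 p.2) Y i) :=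
  Measurable.of_comap_le <| le_iSup₂ (f := fun j (_ : j ∈ generation ⁻¹' T) =>
    MeasurableSpace.comap (Sum.elim (fun p : ℕ × ℕ => X p.1 p.2) Y j) inferInstance) i hi

lemma measurable_generationsSigma_Iic (hZ0 : ∀ ω, Z 0 ω = 0)
    (hZrec : ∀ n ω, Z (n + 1) ω = (∑ i ∈ Finset.range (Z n ω), X (n + 1) (i + 1) ω) + Y (n + 1) ω)
    (n : ℕ) : Measurable[generationsSigma X Y (Iic n)] (Z n) := by
  induction n with
  | zero => simp [funext hZ0]
  | succ n ih =>
    rw [funext (hZrec n)]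
    refine Measurable.add (measurable_sum_range_comp ?_ fun i => ?_) ?_
    · exact ih.mono (biSup_mono fun i hi => le_trans hi n.le_succ) le_rfl
    · exact measurable_generationsSigma (i := Sum.inl (n + 1, i + 1)) (le_refl (n + 1))
    · exact measurable_generationsSigma (i := Sum.inr (n + 1)) (le_refl (n + 1))

variable [MeasurableSpace Ω] {μ : Measure Ω}

lemma generationsSigma_le (hX : ∀ n i, Measurable (X n i)) (hY : ∀ n, Measurable (Y n))
    (T : Set ℕ) : generationsSigma X Y T ≤ ‹MeasurableSpace Ω› :=
  iSup₂_le fun i _ => Measurable.comap_le (by cases i <;> simp [hX, hY])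

lemma indep_generationsSigma (hX : ∀ n i, Measurable (X n i)) (hY : ∀ n, Measurable (Y n))
    (hindep : iIndepFun (m := fun _ : (ℕ × ℕ) ⊕ ℕ => (inferInstance : MeasurableSpace ℕ))
      (Sum.elim (fun p : ℕ × ℕ => X p.1 p.2) Y) μ)
    {T T' : Set ℕ} (hT : Disjoint T T') :
    Indep (generationsSigma X Y T) (generationsSigma X Y T') μ :=
  indep_iSup_of_disjoint (fun i => Measurable.comap_le (by cases i <;> simp [hX, hY]))
    hindep.iIndep (hT.preimage generation)

structure IsGWIProcess (μ : Measure Ω) (X : ℕ → ℕ → Ω → ℕ) (Y Z : ℕ → Ω → ℕ) (a b : ℕ → ℝ) :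
    Prop where
  measurable_X : ∀ n i, Measurable (X n i)
  measurable_Y : ∀ n, Measurable (Y n)
  measure_X_eq : ∀ n i j, (μ {ω | X n i ω = j}).toReal = a j
  measure_Y_eq : ∀ n j, (μ {ω | Y n ω = j}).toReal = b j
  indep : iIndepFun (m := fun _ : (ℕ × ℕ) ⊕ ℕ => (inferInstance : MeasurableSpace ℕ))
    (Sum.elim (fun p : ℕ × ℕ => X p.1 p.2) Y) μ
  Z_zero : ∀ ω, Z 0 ω = 0
  Z_succ : ∀ n ω, Z (n + 1) ω = (∑ i ∈ Finset.range (Z n ω), X (n + 1) (i + 1) ω) + Y (n + 1) ω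

namespace IsGWIProcess

variable {a b : ℕ → ℝ}

lemma nonneg_and_hasSum_offspring (h : IsGWIProcess μ X Y Z a b) : (∀ j, 0 ≤ a j) ∧ HasSum a 1 :=
  have := h.indep.isProbabilityMeasure
  nonneg_and_hasSum_one_of_measure_eq (h.measurable_X 0 0) (h.measure_X_eq 0 0)

lemma nonneg_and_hasSum_immigration (h : IsGWIProcess μ X Y Z a b) :
    (∀ j, 0 ≤ b j) ∧ HasSum b 1 :=
  have := h.indep.isProbabilityMeasure
  nonneg_and_hasSum_one_of_measure_eq (h.measurable_Y 0) (h.measure_Y_eq 0)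

lemma measurable_Z (h : IsGWIProcess μ X Y Z a b) (n : ℕ) : Measurable (Z n) :=
  (measurable_generationsSigma_Iic h.Z_zero h.Z_succ n).mono
    (generationsSigma_le h.measurable_X h.measurable_Y _) le_rfl

lemma lintegral_prod_pow_X_mul_pow_Y (h : IsGWIProcess μ X Y Z a b) {x : ℝ} (hx0 : 0 ≤ x)
    (hx1 : x ≤ 1) (n m : ℕ) :
    ∫⁻ ω, (∏ i ∈ Finset.range m, ENNReal.ofReal x ^ X n (i + 1) ω) * ENNReal.ofReal x ^ Y n ω ∂μ
      = ENNReal.ofReal (pgf a x) ^ m * ENNReal.ofReal (pgf b x) := by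
  have := h.indep.isProbabilityMeasure
  have hprod := lintegral_prod_eq_prod_lintegral_of_indepFun
    (insert (Sum.inr n) ((Finset.range m).image fun i => Sum.inl (n, i + 1))) _
    (h.indep.comp (fun _ k => ENNReal.ofReal x ^ k) fun _ => measurable_of_countable _)
    fun i => (measurable_of_countable _).comp (by cases i <;> simp [h.measurable_X, h.measurable_Y])
  simp [Finset.prod_image,
    lintegral_ofReal_pow_eq_pgf (h.measurable_X _ _) (h.measure_X_eq _ _) hx0 hx1,
    lintegral_ofReal_pow_eq_pgf (h.measurable_Y _) (h.measure_Y_eq _) hx0 hx1] at hprod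
  simpa only [mul_comm] using hprod

lemma lintegral_pow_Z_succ (h : IsGWIProcess μ X Y Z a b) {x : ℝ} (hx0 : 0 ≤ x) (hx1 : x ≤ 1)
    (n : ℕ) :
    ∫⁻ ω, ENNReal.ofReal x ^ Z (n + 1) ω ∂μ
      = ENNReal.ofReal (pgf b x) * ∫⁻ ω, ENNReal.ofReal (pgf a x) ^ Z n ω ∂μ := by
  set G : ℕ → Ω → ℝ≥0∞ := fun m ω =>
    (∏ i ∈ Finset.range m, ENNReal.ofReal x ^ X (n + 1) (i + 1) ω) * ENNReal.ofReal x ^ Y (n + 1) ω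
  have hZn := measurable_generationsSigma_Iic h.Z_zero h.Z_succ n
  have hfiber (m : ℕ) :
      Measurable[generationsSigma X Y (Iic n)] ({ω | Z n ω = m}.indicator fun _ => (1 : ℝ≥0∞)) :=
    measurable_const.indicator (hZn (measurableSet_singleton m))
  have hG (m : ℕ) : Measurable[generationsSigma X Y {n + 1}] (G m) :=
    (Finset.measurable_prod _ fun i _ => (measurable_of_countable _).comp
      (measurable_generationsSigma (i := Sum.inl (n + 1, i + 1)) rfl)).mul
      ((measurable_of_countable _).comp (measurable_generationsSigma (i := Sum.inr (n + 1)) rfl))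
  have hle := generationsSigma_le h.measurable_X h.measurable_Y
  -- condition on the value of `Z n`, which is independent of generation `n + 1`
  have hsplit (ω : Ω) :
      ENNReal.ofReal x ^ Z (n + 1) ω = ∑' m, {ω | Z n ω = m}.indicator (fun _ => 1) ω * G m ω := by
    rw [tsum_eq_single (Z n ω) fun m hm => by simp [Ne.symm hm]]
    simp [G, h.Z_succ, pow_add, Finset.prod_pow_eq_pow_sum]
  calc ∫⁻ ω, ENNReal.ofReal x ^ Z (n + 1) ω ∂μ
      = ∑' m, ∫⁻ ω, {ω | Z n ω = m}.indicator (fun _ => 1) ω * G m ω ∂μ := by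
        rw [lintegral_congr hsplit]
        exact lintegral_tsum fun m =>
          (((hfiber m).mono (hle _) le_rfl).mul ((hG m).mono (hle _) le_rfl)).aemeasurable
    _ = ∑' m, ENNReal.ofReal (pgf a x) ^ m * μ {ω | Z n ω = m} * ENNReal.ofReal (pgf b x) := by
        congr with m
        rw [lintegral_mul_eq_lintegral_mul_lintegral_of_independent_measurableSpace (hle _) (hle _)
          (indep_generationsSigma h.measurable_X h.measurable_Y h.indep (T := Iic n)
            (T' := {n + 1}) (by simp)) (hfiber m) (hG m),
          lintegral_indicator_const (show MeasurableSet {ω | Z n ω = m} from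
            h.measurable_Z n (measurableSet_singleton m)), one_mul,
          h.lintegral_prod_pow_X_mul_pow_Y hx0 hx1]
        ring
    _ = _ := by
        rw [lintegral_comp_eq_tsum (h.measurable_Z n), ENNReal.tsum_mul_right, mul_comm]

theorem lintegral_pow_Z_eq_Hgen (h : IsGWIProcess μ X Y Z a b) (n : ℕ) {x : ℝ} (hx0 : 0 ≤ x)
    (hx1 : x ≤ 1) : ∫⁻ ω, ENNReal.ofReal x ^ Z n ω ∂μ = ENNReal.ofReal (Hgen a b n x) := by
  have := h.indep.isProbabilityMeasure
  obtain ⟨ha, ha1⟩ := h.nonneg_and_hasSum_offspring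
  obtain ⟨hb, -⟩ := h.nonneg_and_hasSum_immigration
  induction n generalizing x with
  | zero => simp [h.Z_zero, Hgen]
  | succ n ih =>
    have hHgen : Hgen a b (n + 1) x = pgf b x * Hgen a b n (pgf a x) := by
      simp only [Hgen, Finset.prod_range_succ', Function.iterate_succ_apply, Function.iterate_zero,
        id, mul_comm]
    rw [h.lintegral_pow_Z_succ hx0 hx1, ih (pgf_nonneg ha hx0) (pgf_le_one ha ha1 hx0 hx1), hHgen,
      ENNReal.ofReal_mul (pgf_nonneg hb hx0)]

lemma measure_Z_le_le_two_mul_Hgen (h : IsGWIProcess μ X Y Z a b) (n : ℕ) {k : ℕ} (hk : 1 ≤ k) :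
    (μ {ω | Z n ω ≤ k}).toReal ≤ 2 * Hgen a b n (1 - 1 / (2 * k)) := by
  have := h.indep.isProbabilityMeasure
  obtain ⟨ha, -⟩ := h.nonneg_and_hasSum_offspring
  obtain ⟨hb, -⟩ := h.nonneg_and_hasSum_immigration
  set x : ℝ := 1 - 1 / (2 * k)
  have hk' : (1 : ℝ) ≤ k := by exact_mod_cast hk
  have hx0 : 0 ≤ x := by simp only [x]; rw [sub_nonneg, div_le_one (by positivity)]; linarith
  have hx1 : x ≤ 1 := by simp only [x]; linarith [one_div_nonneg.2 (by positivity : (0:ℝ) ≤ 2 * k)]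
  have hxk : 1 / 2 ≤ x ^ k := by
    have := one_add_mul_le_pow (a := -(1 / (2 * (k : ℝ)))) (by linarith) k
    rwa [← sub_eq_add_neg, show 1 + k * -(1 / (2 * (k : ℝ))) = 1 / 2 by field_simp; ring] at this
  have hmarkov : ENNReal.ofReal x ^ k * μ {ω | Z n ω ≤ k} ≤ ENNReal.ofReal (Hgen a b n x) := by
    rw [← h.lintegral_pow_Z_eq_Hgen n hx0 hx1]
    calc _ ≤ ENNReal.ofReal x ^ k * μ {ω | ENNReal.ofReal x ^ k ≤ ENNReal.ofReal x ^ Z n ω} := by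
          gcongr
          exact fun hω => pow_le_pow_right_of_le_one' (ENNReal.ofReal_le_one.2 hx1) hω
      _ ≤ _ := mul_meas_ge_le_lintegral₀
          ((measurable_of_countable _).comp (h.measurable_Z n)).aemeasurable _
  have := ENNReal.toReal_mono ENNReal.ofReal_ne_top hmarkov
  rw [ENNReal.toReal_mul, ENNReal.toReal_pow, ENNReal.toReal_ofReal hx0,
    ENNReal.toReal_ofReal (Hgen_nonneg ha hb n hx0)] at this
  nlinarith [ENNReal.toReal_nonneg (a := μ {ω | Z n ω ≤ k})]

end IsGWIProcess

end GaltonWatsonImmigration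

lemma eventually_one_le_and_one_div_two_mul_le {k : ℕ → ℕ} (hk : Tendsto k atTop atTop)
    {s₀ : ℝ} (hs₀ : 0 < s₀) : ∀ᶠ n in atTop, 1 ≤ k n ∧ 1 / (2 * k n) ≤ s₀ := by
  have hinv : Tendsto (fun n => 1 / (2 * (k n : ℝ))) atTop (𝓝 0) := by
    simpa only [one_div, Function.comp_def, Pi.inv_def] using
      ((tendsto_natCast_atTop_atTop.comp hk).const_mul_atTop two_pos).inv_tendsto_atTop
  filter_upwards [hk.eventually_ge_atTop 1, hinv.eventually (ge_mem_nhds hs₀)] with n h1 h2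
  exact ⟨h1, h2⟩

lemma one_add_half_rpow_neg_le {σ y : ℝ} (hσ : 0 ≤ σ) (hy : 0 ≤ y) :
    (1 + y / 2) ^ (-σ) ≤ 2 ^ σ * (1 + y) ^ (-σ) := by
  calc (1 + y / 2) ^ (-σ) ≤ ((1 + y) / 2) ^ (-σ) :=
        Real.rpow_le_rpow_of_nonpos (by positivity) (by linarith) (by linarith)
    _ = 2 ^ σ * (1 + y) ^ (-σ) := by
        rw [Real.div_rpow (by positivity) (by norm_num), Real.rpow_neg (by norm_num : (0:ℝ) ≤ 2)]
        field_simp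

theorem stmt6_general
    {Ω : Type} [MeasureSpace Ω]
    (X : ℕ → ℕ → Ω → ℕ) (Y : ℕ → Ω → ℕ) (Z : ℕ → Ω → ℕ)
    (a b : ℕ → ℝ)
    (hXmeas : ∀ n i, Measurable (X n i)) (hYmeas : ∀ n, Measurable (Y n))
    (hXdist : ∀ n i j, (ℙ {ω | X n i ω = j}).toReal = a j)
    (hYdist : ∀ n j, (ℙ {ω | Y n ω = j}).toReal = b j)
    (hindep : iIndepFun (m := fun _ : (ℕ × ℕ) ⊕ ℕ => (inferInstance : MeasurableSpace ℕ))
      (Sum.elim (fun p : ℕ × ℕ => X p.1 p.2) Y) ℙ)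
    (hZ0 : ∀ ω, Z 0 ω = 0)
    (hZrec : ∀ n ω, Z (n + 1) ω =
      (∑ i ∈ Finset.range (Z n ω), X (n + 1) (i + 1) ω) + Y (n + 1) ω)
    (haMoment : Summable (fun j : ℕ => a j * j ^ 2 * Real.log j))
    (hbMoment : Summable (fun j : ℕ => b j * j ^ 2))
    (haMeanSummable : Summable (fun j : ℕ => a j * j))
    (haMean : ∑' j : ℕ, a j * j = 1)
    (β γ σ : ℝ)
    (hβ : β = ∑' j : ℕ, b j * j)
    (hγ : γ = (1 / 2) * ∑' j : ℕ, a j * ((j : ℝ) * ((j : ℝ) - 1)))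
    (hγpos : 0 < γ)
    (hσ : σ = β / γ)
    (k : ℕ → ℕ)
    (hkinf : Tendsto k atTop atTop) :
    ∃ C₃ : ℝ, 0 < C₃ ∧ ∃ N : ℕ, ∀ n : ℕ, N ≤ n →
      (ℙ {ω | Z n ω ≤ k n}).toReal ≤ C₃ * (1 + γ * n / k n) ^ (-σ) := by
  have h : IsGWIProcess ℙ X Y Z a b := ⟨hXmeas, hYmeas, hXdist, hYdist, hindep, hZ0, hZrec⟩
  obtain ⟨ha, ha1⟩ := h.nonneg_and_hasSum_offspring
  obtain ⟨hb, hb1⟩ := h.nonneg_and_hasSum_immigration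
  have haVar : HasSum (fun j : ℕ => a j * ((j : ℝ) * ((j : ℝ) - 1))) (2 * γ) := by
    rw [hγ, ← mul_assoc, mul_one_div_cancel two_ne_zero, one_mul]
    exact (summable_mul_mul_sub_one (summable_mul_sq_of_summable_mul_sq_mul_log ha haMoment)
      haMeanSummable).hasSum
  have hbMean := summable_mul_of_summable_mul_sq hb hbMoment
  obtain ⟨C, s₀, hC, hs₀, hH⟩ := Hgen_one_sub_le ha ha1 (haMean ▸ haMeanSummable.hasSum) haVar
    hγpos hb hb1 (hβ ▸ hbMean.hasSum) (summable_mul_mul_sub_one hbMoment hbMean).hasSum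
  have hσ0 : 0 ≤ σ :=
    hσ ▸ div_nonneg (hβ ▸ tsum_nonneg fun j => mul_nonneg (hb j) j.cast_nonneg) hγpos.le
  obtain ⟨N, hN⟩ := eventually_atTop.1 (eventually_one_le_and_one_div_two_mul_le hkinf hs₀)
  refine ⟨2 * 2 ^ σ * C, by positivity, N, fun n hn => ?_⟩
  obtain ⟨hk1, hks⟩ := hN n hn
  have hHn := hH n _ (by positivity) hks
  rw [← hσ, show γ * n * (1 / (2 * k n)) = γ * n / k n / 2 by ring] at hHn
  calc (ℙ {ω | Z n ω ≤ k n}).toReal ≤ 2 * Hgen a b n (1 - 1 / (2 * k n)) :=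
        h.measure_Z_le_le_two_mul_Hgen n hk1
    _ ≤ 2 * (C * (2 ^ σ * (1 + γ * n / k n) ^ (-σ))) := by
        grw [hHn, one_add_half_rpow_neg_le hσ0 (by positivity)]
    _ = _ := by ring

theorem stmt6
    {Ω : Type} [MeasureSpace Ω] (hprob : IsProbabilityMeasure (ℙ : Measure Ω))
    (X : ℕ → ℕ → Ω → ℕ) (Y : ℕ → Ω → ℕ) (Z : ℕ → Ω → ℕ)
    (a b : ℕ → ℝ)
    (hXmeas : ∀ n i, Measurable (X n i)) (hYmeas : ∀ n, Measurable (Y n))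
    (hXdist : ∀ n i j, (ℙ {ω | X n i ω = j}).toReal = a j)
    (hYdist : ∀ n j, (ℙ {ω | Y n ω = j}).toReal = b j)
    (hindep : iIndepFun (m := fun _ : (ℕ × ℕ) ⊕ ℕ => (inferInstance : MeasurableSpace ℕ))
      (Sum.elim (fun p : ℕ × ℕ => X p.1 p.2) Y) ℙ)
    (hZ0 : ∀ ω, Z 0 ω = 0)
    (hZrec : ∀ n ω, Z (n + 1) ω =
      (∑ i ∈ Finset.range (Z n ω), X (n + 1) (i + 1) ω) + Y (n + 1) ω)
    (ha0 : 0 < a 0) (ha01 : a 0 < 1) (hb0 : 0 < b 0) (hb01 : b 0 < 1)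
    (haMoment : Summable (fun j : ℕ => a j * j ^ 2 * Real.log j))
    (hbMoment : Summable (fun j : ℕ => b j * j ^ 2))
    (haMeanSummable : Summable (fun j : ℕ => a j * j))
    (haMean : ∑' j : ℕ, a j * j = 1)
    (β γ σ : ℝ)
    (hβ : β = ∑' j : ℕ, b j * j) (hβpos : 0 < β)
    (hγ : γ = (1 / 2) * ∑' j : ℕ, a j * ((j : ℝ) * ((j : ℝ) - 1)))
    (hγpos : 0 < γ)
    (hσ : σ = β / γ)
    (k : ℕ → ℕ)
    (hkinf : Tendsto k atTop atTop)
    (hko : Tendsto (fun n : ℕ => (k n : ℝ) / n) atTop (𝓝 0)) :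
    ∃ C₃ : ℝ, 0 < C₃ ∧ ∃ N : ℕ, ∀ n : ℕ, N ≤ n →
      (ℙ {ω | Z n ω ≤ k n}).toReal ≤ C₃ * (1 + γ * n / k n) ^ (-σ) :=
  stmt6_general X Y Z a b hXmeas hYmeas hXdist hYdist hindep hZ0 hZrec haMoment hbMoment
    haMeanSummable haMean β γ σ hβ hγ hγpos hσ k hkinf
end

section
/- Let A(x) = Σ_{j≥0} a_j x^j be a probability generating function with 0 < a_0 < 1, A′(1−) = 1 and 0 < γ := A″(1−)/2 < ∞. Define δ(x) = γ − [1/(1 − A(x)) − 1/(1 − x)], h_n(x) = Σ_{m=0}^{n−1} δ(A_m(x)) for n ≥ 1, and h_0(x) = 0, where A_m is the m-th iterate of A. Then for all 0 ≤ x < 1 and all n ≥ 0: (i) 1/(1 − x) + nγ − 1/(1 − A_n(x)) = h_n(x); and (ii) −γ²(1 − x)/(1 − a_0) ≤ δ(x) ≤ ε(x), where ε(x) := γ − (A(x) − x)/(1 − x)² satisfies ε(x) ≥ 0, ε is non-increasing on [0,1), and ε(x) → 0 as x ↑ 1. -/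
/-!
Expanding `1 - x ^ j` and `j - (1 + x + ⋯ + x ^ (j - 1))` as multiples of `1 - x` gives
`1 - A x = (1 - x) B x` and `1 - B x = (1 - x) C x` (`B = pgfQuot a`, `C = pgfQuot₂ a`) for
power series `B`, `C` with nonnegative coefficients, hence nondecreasing on `[0, 1]`, with
`B 0 = 1 - a 0`, `B 1 = 1` and `C 1 = γ`. On `[0, 1)` this makes `ε = γ - C` and `δ = γ - C / B`,
and the bounds, the monotonicity of `ε` and (by dominated convergence) its limit follow.
Part (i) is a telescoping sum.
-/

open Filter Real Set
open scoped Topology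

noncomputable def geomSum (x : ℝ) (j : ℕ) : ℝ := ∑ i ∈ Finset.range j, x ^ i

noncomputable def geomSum₂ (x : ℝ) (j : ℕ) : ℝ := ∑ i ∈ Finset.range j, geomSum x i

lemma one_sub_mul_geomSum (x : ℝ) (j : ℕ) : (1 - x) * geomSum x j = 1 - x ^ j :=
  mul_neg_geom_sum x j

lemma one_sub_mul_geomSum₂ (x : ℝ) (j : ℕ) : (1 - x) * geomSum₂ x j = j - geomSum x j := by
  rw [geomSum₂, Finset.mul_sum, Finset.sum_congr rfl fun i _ => one_sub_mul_geomSum x i,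
    Finset.sum_sub_distrib, geomSum]
  simp

lemma geomSum_one (j : ℕ) : geomSum 1 j = j := by simp [geomSum]

lemma geomSum₂_one (j : ℕ) : geomSum₂ 1 j = j * (j - 1) / 2 := by
  induction j with
  | zero => simp [geomSum₂]
  | succ j ih =>
    rw [geomSum₂, Finset.sum_range_succ, ← geomSum₂, ih, geomSum_one]
    push_cast
    ring

lemma geomSum_nonneg {x : ℝ} (hx : 0 ≤ x) (j : ℕ) : 0 ≤ geomSum x j :=
  Finset.sum_nonneg fun i _ => pow_nonneg hx i

lemma geomSum₂_nonneg {x : ℝ} (hx : 0 ≤ x) (j : ℕ) : 0 ≤ geomSum₂ x j :=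
  Finset.sum_nonneg fun i _ => geomSum_nonneg hx i

lemma geomSum_mono {x y : ℝ} (hx : 0 ≤ x) (hxy : x ≤ y) (j : ℕ) : geomSum x j ≤ geomSum y j :=
  Finset.sum_le_sum fun i _ => pow_le_pow_left₀ hx hxy i

lemma geomSum₂_mono {x y : ℝ} (hx : 0 ≤ x) (hxy : x ≤ y) (j : ℕ) :
    geomSum₂ x j ≤ geomSum₂ y j :=
  Finset.sum_le_sum fun i _ => geomSum_mono hx hxy i

lemma continuous_geomSum₂ (j : ℕ) : Continuous fun x => geomSum₂ x j := by
  unfold geomSum₂ geomSum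
  fun_prop

section MonotoneFamily

variable {a : ℕ → ℝ} {f : ℝ → ℕ → ℝ} {x : ℝ}

lemma summable_mul_of_monotoneOn (ha : ∀ j, 0 ≤ a j) (hf₀ : ∀ j, 0 ≤ f 0 j)
    (hf : ∀ j, MonotoneOn (f · j) (Icc 0 1)) (hs : Summable fun j => a j * f 1 j)
    (hx : x ∈ Icc 0 1) : Summable fun j => a j * f x j := by
  have h0 : (0 : ℝ) ∈ Icc 0 1 := ⟨le_rfl, zero_le_one⟩
  have h1 : (1 : ℝ) ∈ Icc 0 1 := ⟨zero_le_one, le_rfl⟩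
  refine .of_nonneg_of_le (fun j => mul_nonneg (ha j) ?_)
    (fun j => mul_le_mul_of_nonneg_left (hf j hx h1 hx.2) (ha j)) hs
  exact (hf₀ j).trans (hf j h0 hx hx.1)

lemma monotoneOn_tsum_mul (ha : ∀ j, 0 ≤ a j) (hf₀ : ∀ j, 0 ≤ f 0 j)
    (hf : ∀ j, MonotoneOn (f · j) (Icc 0 1)) (hs : Summable fun j => a j * f 1 j) :
    MonotoneOn (fun x => ∑' j, a j * f x j) (Icc 0 1) := fun _ hx _ hy hxy =>
  Summable.tsum_le_tsum (fun j => mul_le_mul_of_nonneg_left (hf j hx hy hxy) (ha j))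
    (summable_mul_of_monotoneOn ha hf₀ hf hs hx) (summable_mul_of_monotoneOn ha hf₀ hf hs hy)

lemma tendsto_tsum_mul_nhdsLT_one (ha : ∀ j, 0 ≤ a j) (hf₀ : ∀ j, 0 ≤ f 0 j)
    (hf : ∀ j, MonotoneOn (f · j) (Icc 0 1)) (hs : Summable fun j => a j * f 1 j)
    (hcont : ∀ j, Continuous (f · j)) :
    Tendsto (fun x => ∑' j, a j * f x j) (𝓝[<] 1) (𝓝 (∑' j, a j * f 1 j)) := by
  refine tendsto_tsum_of_dominated_convergence hs
    (fun j => ((continuous_const.mul (hcont j)).tendsto 1).mono_left nhdsWithin_le_nhds) ?_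
  filter_upwards [Ioo_mem_nhdsLT zero_lt_one] with x hx j
  have hx : x ∈ Icc 0 1 := Ioo_subset_Icc_self hx
  have hfx : 0 ≤ f x j := (hf₀ j).trans (hf j ⟨le_rfl, zero_le_one⟩ hx hx.1)
  rw [Real.norm_of_nonneg (mul_nonneg (ha j) hfx)]
  exact mul_le_mul_of_nonneg_left (hf j hx ⟨zero_le_one, le_rfl⟩ hx.2) (ha j)

end MonotoneFamily

lemma sum_range_sub_one_div_one_sub_iterate (F : ℝ → ℝ) (γ x : ℝ) (n : ℕ) :
    ∑ m ∈ Finset.range n, (γ - (1 / (1 - F (F^[m] x)) - 1 / (1 - F^[m] x))) =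
      1 / (1 - x) + n * γ - 1 / (1 - F^[n] x) := by
  simp_rw [← Function.iterate_succ_apply' F]
  rw [Finset.sum_sub_distrib, Finset.sum_range_sub (fun m => 1 / (1 - F^[m] x))]
  simp only [Finset.sum_const, Finset.card_range, nsmul_eq_mul, Function.iterate_zero, id_eq]
  ring

noncomputable def pgfQuot (a : ℕ → ℝ) (x : ℝ) : ℝ := ∑' j, a j * geomSum x j

noncomputable def pgfQuot₂ (a : ℕ → ℝ) (x : ℝ) : ℝ := ∑' j, a j * geomSum₂ x j

section Quotients

variable {a : ℕ → ℝ} {x : ℝ}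

lemma pgf_zero (a : ℕ → ℝ) : pgf a 0 = a 0 := by
  rw [pgf, tsum_eq_single 0 fun j hj => by simp [hj]]
  simp

lemma pgf_one (a : ℕ → ℝ) : pgf a 1 = ∑' j, a j := by simp [pgf]

lemma pgfQuot_one (a : ℕ → ℝ) : pgfQuot a 1 = ∑' j, a j * j := by simp [pgfQuot, geomSum_one]

lemma pgfQuot₂_one (a : ℕ → ℝ) :
    pgfQuot₂ a 1 = 1 / 2 * ∑' j, a j * ((j : ℝ) * ((j : ℝ) - 1)) := by
  rw [pgfQuot₂, ← tsum_mul_left]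
  congr 1 with j
  rw [geomSum₂_one]
  ring

lemma summable_mul_pow_s9 (ha : ∀ j, 0 ≤ a j) (hs : Summable a) (hx : x ∈ Icc 0 1) :
    Summable fun j => a j * x ^ j :=
  summable_mul_of_monotoneOn (f := fun x j => x ^ j) ha (fun j => pow_nonneg le_rfl j)
    (fun j _ hx _ _ hxy => pow_le_pow_left₀ hx.1 hxy j) (by simpa using hs) hx

lemma monotoneOn_pgfQuot (ha : ∀ j, 0 ≤ a j) (hs : Summable fun j => a j * j) :
    MonotoneOn (pgfQuot a) (Icc 0 1) :=
  monotoneOn_tsum_mul (f := geomSum) ha (geomSum_nonneg le_rfl)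
    (fun j _ hx _ _ hxy => geomSum_mono hx.1 hxy j) (by simpa [geomSum_one] using hs)

lemma summable_mul_geomSum (ha : ∀ j, 0 ≤ a j) (hs : Summable fun j => a j * j)
    (hx : x ∈ Icc 0 1) : Summable fun j => a j * geomSum x j :=
  summable_mul_of_monotoneOn (f := geomSum) ha (geomSum_nonneg le_rfl)
    (fun j _ hx _ _ hxy => geomSum_mono hx.1 hxy j) (by simpa [geomSum_one] using hs) hx

lemma summable_mul_geomSum₂_one (hs : Summable fun j => a j * ((j : ℝ) * ((j : ℝ) - 1))) :
    Summable fun j => a j * geomSum₂ 1 j :=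
  (hs.mul_left (1 / 2)).congr fun j => by rw [geomSum₂_one]; ring

lemma monotoneOn_pgfQuot₂ (ha : ∀ j, 0 ≤ a j)
    (hs : Summable fun j => a j * ((j : ℝ) * ((j : ℝ) - 1))) :
    MonotoneOn (pgfQuot₂ a) (Icc 0 1) :=
  monotoneOn_tsum_mul (f := geomSum₂) ha (geomSum₂_nonneg le_rfl)
    (fun j _ hx _ _ hxy => geomSum₂_mono hx.1 hxy j) (summable_mul_geomSum₂_one hs)

lemma pgfQuot₂_mem_Icc (ha : ∀ j, 0 ≤ a j)
    (hs : Summable fun j => a j * ((j : ℝ) * ((j : ℝ) - 1))) (hx : x ∈ Icc 0 1) :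
    pgfQuot₂ a x ∈ Icc 0 (pgfQuot₂ a 1) :=
  ⟨tsum_nonneg fun j => mul_nonneg (ha j) (geomSum₂_nonneg hx.1 j),
    monotoneOn_pgfQuot₂ ha hs hx ⟨zero_le_one, le_rfl⟩ hx.2⟩

lemma tendsto_pgfQuot₂_nhdsLT_one (ha : ∀ j, 0 ≤ a j)
    (hs : Summable fun j => a j * ((j : ℝ) * ((j : ℝ) - 1))) :
    Tendsto (pgfQuot₂ a) (𝓝[<] 1) (𝓝 (pgfQuot₂ a 1)) :=
  tendsto_tsum_mul_nhdsLT_one (f := geomSum₂) ha (geomSum₂_nonneg le_rfl)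
    (fun j _ hx _ _ hxy => geomSum₂_mono hx.1 hxy j) (summable_mul_geomSum₂_one hs)
    continuous_geomSum₂

lemma pgf_one_sub_pgf (ha : ∀ j, 0 ≤ a j) (hs : Summable a) (hx : x ∈ Icc 0 1) :
    pgf a 1 - pgf a x = (1 - x) * pgfQuot a x := by
  rw [pgf, pgf, pgfQuot, ← tsum_mul_left,
    ← Summable.tsum_sub (by simpa using hs) (summable_mul_pow_s9 ha hs hx)]
  congr 1 with j
  rw [mul_left_comm, one_sub_mul_geomSum]
  ring

lemma pgfQuot_one_sub_pgfQuot (ha : ∀ j, 0 ≤ a j) (hs : Summable fun j => a j * j)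
    (hx : x ∈ Icc 0 1) : pgfQuot a 1 - pgfQuot a x = (1 - x) * pgfQuot₂ a x := by
  rw [pgfQuot, pgfQuot, pgfQuot₂, ← tsum_mul_left,
    ← Summable.tsum_sub (summable_mul_geomSum ha hs ⟨zero_le_one, le_rfl⟩)
      (summable_mul_geomSum ha hs hx)]
  congr 1 with j
  rw [mul_left_comm, one_sub_mul_geomSum₂, geomSum_one]
  ring

end Quotients

structure IsCritical (a : ℕ → ℝ) : Prop where
  nonneg : ∀ j, 0 ≤ a j
  summable : Summable a
  tsum_eq_one : ∑' j, a j = 1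
  summable_mul_id : Summable fun j => a j * j
  tsum_mul_id_eq_one : ∑' j, a j * j = 1

namespace IsCritical

variable {a : ℕ → ℝ} {x : ℝ}

lemma one_sub_pgf (ha : IsCritical a) (hx : x ∈ Icc 0 1) :
    1 - pgf a x = (1 - x) * pgfQuot a x := by
  rw [← pgf_one_sub_pgf ha.nonneg ha.summable hx, pgf_one, ha.tsum_eq_one]

lemma one_sub_pgfQuot (ha : IsCritical a) (hx : x ∈ Icc 0 1) :
    1 - pgfQuot a x = (1 - x) * pgfQuot₂ a x := by
  rw [← pgfQuot_one_sub_pgfQuot ha.nonneg ha.summable_mul_id hx, pgfQuot_one,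
    ha.tsum_mul_id_eq_one]

lemma pgfQuot_mem_Icc (ha : IsCritical a) (hx : x ∈ Icc 0 1) :
    pgfQuot a x ∈ Icc (1 - a 0) 1 := by
  have h₀ : (0 : ℝ) ∈ Icc 0 1 := ⟨le_rfl, zero_le_one⟩
  have h₁ : (1 : ℝ) ∈ Icc 0 1 := ⟨zero_le_one, le_rfl⟩
  have hB₀ : pgfQuot a 0 = 1 - a 0 := by simpa [pgf_zero] using (ha.one_sub_pgf h₀).symm
  have hB₁ : pgfQuot a 1 = 1 := by rw [pgfQuot_one, ha.tsum_mul_id_eq_one]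
  have hmono := monotoneOn_pgfQuot ha.nonneg ha.summable_mul_id
  exact ⟨hB₀ ▸ hmono h₀ hx hx.1, hB₁ ▸ hmono hx h₁ hx.2⟩

lemma pgf_sub_self_div_one_sub_sq (ha : IsCritical a) (hx : x ∈ Ico 0 1) :
    (pgf a x - x) / (1 - x) ^ 2 = pgfQuot₂ a x := by
  have hx' := Ico_subset_Icc_self hx
  have h : pgf a x - x = (1 - x) ^ 2 * pgfQuot₂ a x := by
    linear_combination (1 - x) * ha.one_sub_pgfQuot hx' - ha.one_sub_pgf hx'
  rw [h, mul_div_cancel_left₀ _ (pow_ne_zero 2 (sub_ne_zero.2 hx.2.ne'))]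

lemma one_div_one_sub_pgf_sub (ha : IsCritical a) (ha₀ : a 0 < 1) (hx : x ∈ Ico 0 1) :
    1 / (1 - pgf a x) - 1 / (1 - x) = pgfQuot₂ a x / pgfQuot a x := by
  have hx' := Ico_subset_Icc_self hx
  have hB : 0 < pgfQuot a x := (sub_pos.2 ha₀).trans_le (ha.pgfQuot_mem_Icc hx').1
  have h1x : 1 - x ≠ 0 := sub_ne_zero.2 hx.2.ne'
  rw [ha.one_sub_pgf hx']
  field_simp
  exact ha.one_sub_pgfQuot hx'

lemma pgfQuot₂_div_pgfQuot_le (ha : IsCritical a)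
    (hs : Summable fun j => a j * ((j : ℝ) * ((j : ℝ) - 1))) (ha₀ : a 0 < 1)
    (hx : x ∈ Icc 0 1) :
    pgfQuot₂ a x / pgfQuot a x ≤ pgfQuot₂ a 1 + pgfQuot₂ a 1 ^ 2 * (1 - x) / (1 - a 0) := by
  obtain ⟨hB₀, hB₁⟩ := ha.pgfQuot_mem_Icc hx
  obtain ⟨hC₀, hC₁⟩ := pgfQuot₂_mem_Icc ha.nonneg hs hx
  set γ := pgfQuot₂ a 1
  have hB : 0 < pgfQuot a x := (sub_pos.2 ha₀).trans_le hB₀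
  have hγx : 0 ≤ γ * (1 - x) := mul_nonneg (hC₀.trans hC₁) (sub_nonneg.2 hx.2)
  -- `C - γ B = (C - γ) + γ (1 - x) C` with `B, C` the two quotients at `x`
  have hnum : pgfQuot₂ a x - γ * pgfQuot a x ≤ γ ^ 2 * (1 - x) := by
    nlinarith [ha.one_sub_pgfQuot hx, mul_le_mul_of_nonneg_left hC₁ hγx]
  calc pgfQuot₂ a x / pgfQuot a x ≤ γ + γ ^ 2 * (1 - x) / pgfQuot a x := by
        rw [div_le_iff₀ hB, add_mul, div_mul_cancel₀ _ hB.ne']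
        linarith
    _ ≤ γ + γ ^ 2 * (1 - x) / (1 - a 0) := by
        gcongr
        exact mul_nonneg (sq_nonneg γ) (sub_nonneg.2 hx.2)

end IsCritical

theorem stmt9_general
    (a : ℕ → ℝ) (haNonneg : ∀ j, 0 ≤ a j)
    (haSummable : Summable a) (haSum : ∑' j : ℕ, a j = 1)
    (ha01 : a 0 < 1)
    (haMeanSummable : Summable (fun j : ℕ => a j * j))
    (haMean : ∑' j : ℕ, a j * j = 1)
    (hγSummable : Summable (fun j : ℕ => a j * ((j : ℝ) * ((j : ℝ) - 1))))
    (γ : ℝ)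
    (hγ : γ = (1 / 2) * ∑' j : ℕ, a j * ((j : ℝ) * ((j : ℝ) - 1)))
    (δf εf : ℝ → ℝ) (h : ℕ → ℝ → ℝ)
    (hδf : ∀ x, δf x = γ - (1 / (1 - pgf a x) - 1 / (1 - x)))
    (hh : ∀ n x, h n x = ∑ m ∈ Finset.range n, δf ((pgf a)^[m] x))
    (hεf : ∀ x, εf x = γ - (pgf a x - x) / (1 - x) ^ 2) :
    (∀ x : ℝ, 0 ≤ x → x < 1 → ∀ n : ℕ,
        1 / (1 - x) + n * γ - 1 / (1 - (pgf a)^[n] x) = h n x) ∧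
    (∀ x : ℝ, 0 ≤ x → x < 1 →
        -(γ ^ 2 * (1 - x)) / (1 - a 0) ≤ δf x ∧ δf x ≤ εf x ∧ 0 ≤ εf x) ∧
    AntitoneOn εf (Set.Ico (0 : ℝ) 1) ∧
    Tendsto εf (nhdsWithin 1 (Set.Iio (1 : ℝ))) (𝓝 0) := by
  have ha : IsCritical a := ⟨haNonneg, haSummable, haSum, haMeanSummable, haMean⟩
  rw [← pgfQuot₂_one] at hγ
  subst hγ
  have hε : ∀ x ∈ Ico (0 : ℝ) 1, εf x = pgfQuot₂ a 1 - pgfQuot₂ a x := fun x hx => by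
    rw [hεf, ha.pgf_sub_self_div_one_sub_sq hx]
  refine ⟨fun x _ _ n => ?_, fun x hx₀ hx₁ => ?_, fun x hx y hy hxy => ?_, ?_⟩
  · simp only [hh, hδf, sum_range_sub_one_div_one_sub_iterate]
  · have hx : x ∈ Ico 0 1 := ⟨hx₀, hx₁⟩
    have hx' := Ico_subset_Icc_self hx
    obtain ⟨hC₀, hC₁⟩ := pgfQuot₂_mem_Icc haNonneg hγSummable hx'
    obtain ⟨hB₀, hB₁⟩ := ha.pgfQuot_mem_Icc hx'
    have hCB := le_div_self hC₀ ((sub_pos.2 ha01).trans_le hB₀) hB₁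
    have hlow := ha.pgfQuot₂_div_pgfQuot_le hγSummable ha01 hx'
    rw [hδf, ha.one_div_one_sub_pgf_sub ha01 hx, hε x hx, neg_div]
    exact ⟨by linarith, by linarith, by linarith⟩
  · rw [hε x hx, hε y hy]
    linarith [monotoneOn_pgfQuot₂ haNonneg hγSummable (Ico_subset_Icc_self hx)
      (Ico_subset_Icc_self hy) hxy]
  · have hlim : Tendsto (fun x => pgfQuot₂ a 1 - pgfQuot₂ a x) (𝓝[<] 1) (𝓝 0) := by
      simpa using (tendsto_const_nhds (x := pgfQuot₂ a 1)).sub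
        (tendsto_pgfQuot₂_nhdsLT_one haNonneg hγSummable)
    refine hlim.congr' ?_
    filter_upwards [Ioo_mem_nhdsLT zero_lt_one] with x hx
    exact (hε x (Ioo_subset_Ico_self hx)).symm

theorem stmt9
    (a : ℕ → ℝ) (haNonneg : ∀ j, 0 ≤ a j)
    (haSummable : Summable a) (haSum : ∑' j : ℕ, a j = 1)
    (ha0 : 0 < a 0) (ha01 : a 0 < 1)
    (haMeanSummable : Summable (fun j : ℕ => a j * j))
    (haMean : ∑' j : ℕ, a j * j = 1)
    (hγSummable : Summable (fun j : ℕ => a j * ((j : ℝ) * ((j : ℝ) - 1))))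
    (γ : ℝ)
    (hγ : γ = (1 / 2) * ∑' j : ℕ, a j * ((j : ℝ) * ((j : ℝ) - 1)))
    (hγpos : 0 < γ)
    (δf εf : ℝ → ℝ) (h : ℕ → ℝ → ℝ)
    (hδf : ∀ x, δf x = γ - (1 / (1 - pgf a x) - 1 / (1 - x)))
    (hh0 : ∀ x, h 0 x = 0)
    (hh : ∀ n x, h n x = ∑ m ∈ Finset.range n, δf ((pgf a)^[m] x))
    (hεf : ∀ x, εf x = γ - (pgf a x - x) / (1 - x) ^ 2) :
    (∀ x : ℝ, 0 ≤ x → x < 1 → ∀ n : ℕ,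
        1 / (1 - x) + n * γ - 1 / (1 - (pgf a)^[n] x) = h n x) ∧
    (∀ x : ℝ, 0 ≤ x → x < 1 →
        -(γ ^ 2 * (1 - x)) / (1 - a 0) ≤ δf x ∧ δf x ≤ εf x ∧ 0 ≤ εf x) ∧
    AntitoneOn εf (Set.Ico (0 : ℝ) 1) ∧
    Tendsto εf (nhdsWithin 1 (Set.Iio (1 : ℝ))) (𝓝 0) :=
  stmt9_general a haNonneg haSummable haSum ha01 haMeanSummable haMean hγSummable γ hγ δf εf h hδf
    hh hεf
end

section
/- Under hypothesis (H), there exists a constant C > 0 such that for all n ≥ 1 and all x ∈ (0,1), |log H_n(x) + β·Σ_{m=0}^{n−1} (1 − A_m(x))| ≤ C; that is, log H_n(x) = −β·Σ_{m=0}^{n−1} (1 − A_m(x)) + O(1) uniformly in x ∈ (0,1) as n → ∞. -/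
open MeasureTheory ProbabilityTheory Filter Real Set
open scoped ENNReal Topology

/-!
Criticality and a positive second factorial moment give some `j ≥ 2` with `a j > 0`, whence
`A y ≥ y + a j (1 - y)²` on `[0, 1]`; telescoping along the orbit `y_m = A_m x` bounds
`∑ (1 - y_m)²` by `1 / a j`, uniformly in `n` and `x`. On the other hand `b 0 > 0` and the second
moment of `B` give `log B y = -β (1 - y) + O((1 - y)²)` uniformly on `[0, 1]`, so summing over `m`
the error in `log H_n x = ∑ log B (y_m)` stays bounded.
-/

structure IsProbDistrib (c : ℕ → ℝ) : Prop where
  nonneg : ∀ j, 0 ≤ c j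
  hasSum : HasSum c 1

lemma isProbDistrib_measure_fiber {Ω : Type*} [MeasurableSpace Ω] (μ : Measure Ω)
    [IsProbabilityMeasure μ] {f : Ω → ℕ} (hf : Measurable f) :
    IsProbDistrib (fun j => (μ {ω | f ω = j}).toReal) := by
  change IsProbDistrib fun j => (μ (f ⁻¹' {j})).toReal
  have hsum : ∑' j, μ (f ⁻¹' {j}) = 1 := by
    rw [← tsum_univ, tsum_measure_preimage_singleton countable_univ
      (fun j _ => hf (measurableSet_singleton j))]
    simp
  refine ⟨fun j => ENNReal.toReal_nonneg, ?_⟩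
  have hfin : ∑' j, μ (f ⁻¹' {j}) ≠ ∞ := by simp [hsum]
  convert (ENNReal.summable_toReal hfin).hasSum using 1
  rw [← ENNReal.tsum_toReal_eq (fun j => measure_ne_top μ _), hsum, ENNReal.toReal_one]

section PowerDefect

variable {y : ℝ}

lemma one_sub_pow_le_mul_one_sub (j : ℕ) (hy : -1 ≤ y) : 1 - y ^ j ≤ j * (1 - y) := by
  have := one_add_mul_le_pow (a := y - 1) (by linarith) j
  rw [add_sub_cancel] at this
  linarith

lemma mul_one_sub_sub_one_sub_pow_succ (j : ℕ) :
    ((j + 1 : ℕ) : ℝ) * (1 - y) - (1 - y ^ (j + 1))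
      = (j * (1 - y) - (1 - y ^ j)) + (1 - y) * (1 - y ^ j) := by
  push_cast; ring

lemma mul_one_sub_sub_one_sub_pow_le_sq (j : ℕ) (hy0 : -1 ≤ y) (hy1 : y ≤ 1) :
    j * (1 - y) - (1 - y ^ j) ≤ (j : ℝ) ^ 2 * (1 - y) ^ 2 := by
  induction j with
  | zero => simp
  | succ j ih =>
    rw [mul_one_sub_sub_one_sub_pow_succ]
    have := mul_le_mul_of_nonneg_left (one_sub_pow_le_mul_one_sub j hy0)
      (sub_nonneg.2 hy1)
    push_cast
    nlinarith [sq_nonneg (1 - y), (Nat.cast_nonneg j : (0 : ℝ) ≤ j)]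

lemma sq_one_sub_le_mul_one_sub_sub_one_sub_pow {j : ℕ} (hj : 2 ≤ j) (hy0 : 0 ≤ y)
    (hy1 : y ≤ 1) : (1 - y) ^ 2 ≤ j * (1 - y) - (1 - y ^ j) := by
  induction j, hj using Nat.le_induction with
  | base => exact le_of_eq (by push_cast; ring)
  | succ j _ ih =>
    rw [mul_one_sub_sub_one_sub_pow_succ]
    have : 0 ≤ (1 - y) * (1 - y ^ j) :=
      mul_nonneg (sub_nonneg.2 hy1) (sub_nonneg.2 (pow_le_one₀ hy0 hy1))
    linarith

end PowerDefect

lemma abs_log_one_sub_add_le {u : ℝ} (hu0 : 0 ≤ u) (hu : u ≤ 1 / 2) :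
    |log (1 - u) + u| ≤ 2 * u ^ 2 := by
  have h := abs_log_sub_add_sum_range_le (x := u) (by rw [abs_of_nonneg hu0]; linarith) 1
  simp only [Finset.sum_range_one, zero_add, pow_one, Nat.cast_zero, div_one,
    abs_of_nonneg hu0] at h
  calc |log (1 - u) + u| = |u + log (1 - u)| := by rw [add_comm]
    _ ≤ u ^ 2 / (1 - u) := h
    _ ≤ 2 * u ^ 2 := by
      rw [div_le_iff₀ (by linarith)]
      nlinarith [sq_nonneg u]

lemma exists_two_le_pos_of_tsum_pos {c : ℕ → ℝ} (hc : ∀ j, 0 ≤ c j)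
    (h : 0 < ∑' j : ℕ, c j * ((j : ℝ) * ((j : ℝ) - 1))) : ∃ j, 2 ≤ j ∧ 0 < c j := by
  by_contra! hno
  have hzero : ∀ j : ℕ, c j * ((j : ℝ) * ((j : ℝ) - 1)) = 0 := by
    intro j
    rcases lt_or_ge j 2 with hj | hj
    · interval_cases j <;> simp
    · simp [le_antisymm (hno j hj) (hc j)]
  simp [hzero] at h

lemma sum_sq_one_sub_iterate_le {f : ℝ → ℝ} {κ : ℝ} (hf : MapsTo f (Icc 0 1) (Icc 0 1))
    (hstep : ∀ y ∈ Icc (0 : ℝ) 1, y + κ * (1 - y) ^ 2 ≤ f y) {x : ℝ} (hx : x ∈ Icc (0 : ℝ) 1)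
    (n : ℕ) : κ * ∑ m ∈ Finset.range n, (1 - f^[m] x) ^ 2 ≤ 1 := by
  have hmem : ∀ m, f^[m] x ∈ Icc (0 : ℝ) 1 := fun m => hf.iterate m hx
  calc κ * ∑ m ∈ Finset.range n, (1 - f^[m] x) ^ 2
      ≤ ∑ m ∈ Finset.range n, (f^[m + 1] x - f^[m] x) := by
        rw [Finset.mul_sum]
        refine Finset.sum_le_sum fun m _ => ?_
        rw [Function.iterate_succ_apply']
        linarith [hstep _ (hmem m)]
    _ = f^[n] x - x := Finset.sum_range_sub (fun m => f^[m] x) n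
    _ ≤ 1 := by linarith [(hmem n).2, hx.1]

namespace IsProbDistrib

variable {c : ℕ → ℝ} {y : ℝ}

lemma summable (hc : IsProbDistrib c) : Summable c := hc.hasSum.summable

lemma summable_mul_pow (hc : IsProbDistrib c) (hy0 : 0 ≤ y) (hy1 : y ≤ 1) :
    Summable (fun j => c j * y ^ j) :=
  hc.summable.of_nonneg_of_le (fun j => mul_nonneg (hc.nonneg j) (pow_nonneg hy0 j))
    (fun j => mul_le_of_le_one_right (hc.nonneg j) (pow_le_one₀ hy0 hy1))

lemma summable_mul_of_summable_mul_sq (hc : IsProbDistrib c)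
    (h2 : Summable (fun j : ℕ => c j * j ^ 2)) : Summable (fun j : ℕ => c j * j) :=
  h2.of_nonneg_of_le (fun j => mul_nonneg (hc.nonneg j) j.cast_nonneg)
    (fun j => mul_le_mul_of_nonneg_left (by exact_mod_cast Nat.le_self_pow two_ne_zero j)
      (hc.nonneg j))

lemma pgf_nonneg (hc : IsProbDistrib c) (hy0 : 0 ≤ y) : 0 ≤ pgf c y :=
  tsum_nonneg fun j => mul_nonneg (hc.nonneg j) (pow_nonneg hy0 j)

lemma le_pgf (hc : IsProbDistrib c) (hy0 : 0 ≤ y) (hy1 : y ≤ 1) : c 0 ≤ pgf c y := by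
  simpa [pgf] using (hc.summable_mul_pow hy0 hy1).le_tsum 0
    (fun j _ => mul_nonneg (hc.nonneg j) (pow_nonneg hy0 j))

lemma hasSum_one_sub_pgf (hc : IsProbDistrib c) (hy0 : 0 ≤ y) (hy1 : y ≤ 1) :
    HasSum (fun j => c j * (1 - y ^ j)) (1 - pgf c y) := by
  simpa only [pgf, mul_sub, mul_one] using hc.hasSum.sub (hc.summable_mul_pow hy0 hy1).hasSum

lemma pgf_le_one (hc : IsProbDistrib c) (hy0 : 0 ≤ y) (hy1 : y ≤ 1) : pgf c y ≤ 1 :=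
  sub_nonneg.1 <| (hc.hasSum_one_sub_pgf hy0 hy1).nonneg fun j =>
    mul_nonneg (hc.nonneg j) (sub_nonneg.2 (pow_le_one₀ hy0 hy1))

lemma mapsTo_pgf (hc : IsProbDistrib c) : MapsTo (pgf c) (Icc 0 1) (Icc 0 1) :=
  fun _ hy => ⟨hc.pgf_nonneg hy.1, hc.pgf_le_one hy.1 hy.2⟩

lemma hasSum_mean_mul_sub_one_sub_pgf (hc : IsProbDistrib c)
    (hm : Summable (fun j : ℕ => c j * j)) (hy0 : 0 ≤ y) (hy1 : y ≤ 1) :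
    HasSum (fun j => c j * (j * (1 - y) - (1 - y ^ j)))
      ((∑' j : ℕ, c j * j) * (1 - y) - (1 - pgf c y)) := by
  have h := (hm.hasSum.mul_right (1 - y)).sub (hc.hasSum_one_sub_pgf hy0 hy1)
  rwa [show (fun j => c j * j * (1 - y) - c j * (1 - y ^ j))
    = fun j => c j * (j * (1 - y) - (1 - y ^ j)) by funext j; ring] at h

lemma one_sub_pgf_le_mean_mul (hc : IsProbDistrib c) (hm : Summable (fun j : ℕ => c j * j))
    (hy0 : 0 ≤ y) (hy1 : y ≤ 1) : 1 - pgf c y ≤ (∑' j : ℕ, c j * j) * (1 - y) :=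
  sub_nonneg.1 <| (hc.hasSum_mean_mul_sub_one_sub_pgf hm hy0 hy1).nonneg fun j =>
    mul_nonneg (hc.nonneg j) (sub_nonneg.2 (one_sub_pow_le_mul_one_sub j (by linarith)))

lemma mean_mul_sub_one_sub_pgf_le (hc : IsProbDistrib c)
    (h2 : Summable (fun j : ℕ => c j * j ^ 2)) (hy0 : 0 ≤ y) (hy1 : y ≤ 1) :
    (∑' j : ℕ, c j * j) * (1 - y) - (1 - pgf c y)
      ≤ (∑' j : ℕ, c j * j ^ 2) * (1 - y) ^ 2 :=
  hasSum_le (fun j => by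
      rw [mul_assoc]
      exact mul_le_mul_of_nonneg_left
        (mul_one_sub_sub_one_sub_pow_le_sq j (by linarith) hy1) (hc.nonneg j))
    (hc.hasSum_mean_mul_sub_one_sub_pgf (hc.summable_mul_of_summable_mul_sq h2) hy0 hy1)
    (h2.hasSum.mul_right _)

lemma self_add_mul_sq_le_pgf (hc : IsProbDistrib c) (hm : Summable (fun j : ℕ => c j * j))
    (hmean : ∑' j : ℕ, c j * j = 1) {j : ℕ} (hj : 2 ≤ j) (hy : y ∈ Icc (0 : ℝ) 1) :
    y + c j * (1 - y) ^ 2 ≤ pgf c y := by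
  have hsum := hc.hasSum_mean_mul_sub_one_sub_pgf hm hy.1 hy.2
  have hterm := hsum.summable.le_tsum j fun i _ => mul_nonneg (hc.nonneg i)
    (sub_nonneg.2 (one_sub_pow_le_mul_one_sub i (by linarith [hy.1])))
  rw [hsum.tsum_eq, hmean] at hterm
  nlinarith [mul_le_mul_of_nonneg_left
    (sq_one_sub_le_mul_one_sub_sub_one_sub_pow hj hy.1 hy.2) (hc.nonneg j)]

lemma abs_log_pgf_add_mean_mul_le (hc : IsProbDistrib c) (h0 : 0 < c 0)
    (hy0 : 0 ≤ y) (hy1 : y ≤ 1) :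
    |log (pgf c y) + (∑' j : ℕ, c j * j) * (1 - y)| ≤ (∑' j : ℕ, c j * j) - log (c 0) := by
  have hβ : 0 ≤ ∑' j : ℕ, c j * j := tsum_nonneg fun j => mul_nonneg (hc.nonneg j) j.cast_nonneg
  have hlog_le : log (pgf c y) ≤ 0 := log_nonpos (hc.pgf_nonneg hy0) (hc.pgf_le_one hy0 hy1)
  have hle_log : log (c 0) ≤ log (pgf c y) := log_le_log h0 (hc.le_pgf hy0 hy1)
  rw [abs_le]
  constructor <;> nlinarith

lemma exists_abs_log_pgf_add_mean_mul_le (hc : IsProbDistrib c) (h0 : 0 < c 0)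
    (h2 : Summable (fun j : ℕ => c j * j ^ 2)) :
    ∃ M, 0 ≤ M ∧ ∀ y ∈ Icc (0 : ℝ) 1,
      |log (pgf c y) + (∑' j : ℕ, c j * j) * (1 - y)| ≤ M * (1 - y) ^ 2 := by
  set β := ∑' j : ℕ, c j * j
  set Γ := ∑' j : ℕ, c j * j ^ 2
  set K := β - log (c 0)
  have hβ : 0 ≤ β := tsum_nonneg fun j => mul_nonneg (hc.nonneg j) j.cast_nonneg
  have hΓ : 0 ≤ Γ := tsum_nonneg fun j => mul_nonneg (hc.nonneg j) (sq_nonneg _)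
  have hK : 0 ≤ K := (abs_nonneg _).trans (hc.abs_log_pgf_add_mean_mul_le h0 zero_le_one le_rfl)
  refine ⟨(2 * β ^ 2 + Γ) + 4 * β ^ 2 * K, by positivity, fun y ⟨hy0, hy1⟩ => ?_⟩
  have hy : 0 ≤ (1 - y) ^ 2 := sq_nonneg _
  -- near `y = 1` expand `log (1 - u)` with `u = 1 - pgf c y ≤ β (1 - y)`; elsewhere `(1 - y)²` is
  -- bounded below and the crude bound `K` suffices
  rcases le_or_gt (β * (1 - y)) (1 / 2) with hnear | hfar
  · set u := 1 - pgf c y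
    have hu0 : 0 ≤ u := sub_nonneg.2 (hc.pgf_le_one hy0 hy1)
    have huβ : u ≤ β * (1 - y) := hc.one_sub_pgf_le_mean_mul
      (hc.summable_mul_of_summable_mul_sq h2) hy0 hy1
    have hdefect : β * (1 - y) - u ≤ Γ * (1 - y) ^ 2 := hc.mean_mul_sub_one_sub_pgf_le h2 hy0 hy1
    have hu2 : u ^ 2 ≤ β ^ 2 * (1 - y) ^ 2 := by rw [← mul_pow]; exact pow_le_pow_left₀ hu0 huβ 2
    have hlog := abs_log_one_sub_add_le hu0 (huβ.trans hnear)
    rw [show pgf c y = 1 - u by ring]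
    calc |log (1 - u) + β * (1 - y)|
        = |(log (1 - u) + u) + (β * (1 - y) - u)| := by ring_nf
      _ ≤ |log (1 - u) + u| + |β * (1 - y) - u| := abs_add_le _ _
      _ ≤ 2 * u ^ 2 + Γ * (1 - y) ^ 2 := by
        rw [abs_of_nonneg (sub_nonneg.2 huβ)]; linarith
      _ ≤ _ := by nlinarith
  · have hone : 1 ≤ 4 * β ^ 2 * (1 - y) ^ 2 := by nlinarith
    calc _ ≤ K := hc.abs_log_pgf_add_mean_mul_le h0 hy0 hy1
      _ ≤ 4 * β ^ 2 * K * (1 - y) ^ 2 := by nlinarith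
      _ ≤ _ := by nlinarith [mul_nonneg (sq_nonneg β) hy]

end IsProbDistrib

lemma abs_log_Hgen_add_le {a b : ℕ → ℝ} (hb : IsProbDistrib b) (hb0 : 0 < b 0) {β M : ℝ}
    (hM : ∀ y ∈ Icc (0 : ℝ) 1, |log (pgf b y) + β * (1 - y)| ≤ M * (1 - y) ^ 2)
    {x : ℝ} (hx : ∀ m, (pgf a)^[m] x ∈ Icc (0 : ℝ) 1) (n : ℕ) :
    |log (Hgen a b n x) + β * ∑ m ∈ Finset.range n, (1 - (pgf a)^[m] x)|
      ≤ M * ∑ m ∈ Finset.range n, (1 - (pgf a)^[m] x) ^ 2 := by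
  rw [Hgen, log_prod fun m _ => (hb0.trans_le (hb.le_pgf (hx m).1 (hx m).2)).ne',
    Finset.mul_sum, Finset.mul_sum, ← Finset.sum_add_distrib]
  exact (Finset.abs_sum_le_sum_abs _ _).trans
    (Finset.sum_le_sum fun m _ => hM _ (hx m))

theorem stmt14_general
    {Ω : Type} [MeasureSpace Ω] (hprob : IsProbabilityMeasure (ℙ : Measure Ω))
    (X : ℕ → ℕ → Ω → ℕ) (Y : ℕ → Ω → ℕ)
    (a b : ℕ → ℝ)
    (hXmeas : ∀ n i, Measurable (X n i)) (hYmeas : ∀ n, Measurable (Y n))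
    (hXdist : ∀ n i j, (ℙ {ω | X n i ω = j}).toReal = a j)
    (hYdist : ∀ n j, (ℙ {ω | Y n ω = j}).toReal = b j)
    (hb0 : 0 < b 0)
    (hbMoment : Summable (fun j : ℕ => b j * j ^ 2))
    (haMeanSummable : Summable (fun j : ℕ => a j * j))
    (haMean : ∑' j : ℕ, a j * j = 1)
    (β γ : ℝ)
    (hβ : β = ∑' j : ℕ, b j * j)
    (hγ : γ = (1 / 2) * ∑' j : ℕ, a j * ((j : ℝ) * ((j : ℝ) - 1)))
    (hγpos : 0 < γ)
 :
    ∃ C : ℝ, 0 < C ∧ ∀ n : ℕ, 1 ≤ n → ∀ x : ℝ, 0 < x → x < 1 →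
      |Real.log (Hgen a b n x) + β * ∑ m ∈ Finset.range n, (1 - (pgf a)^[m] x)| ≤ C := by
  have ha : IsProbDistrib a := by
    simpa only [hXdist 0 0] using isProbDistrib_measure_fiber ℙ (hXmeas 0 0)
  have hb : IsProbDistrib b := by
    simpa only [hYdist 0] using isProbDistrib_measure_fiber ℙ (hYmeas 0)
  obtain ⟨j, hj, haj⟩ := exists_two_le_pos_of_tsum_pos ha.nonneg (by linarith)
  obtain ⟨M, hM0, hM⟩ := hb.exists_abs_log_pgf_add_mean_mul_le hb0 hbMoment
  refine ⟨M / a j + 1, by positivity, fun n _ x hx0 hx1 => ?_⟩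
  have hx : x ∈ Icc (0 : ℝ) 1 := ⟨hx0.le, hx1.le⟩
  have hsq := sum_sq_one_sub_iterate_le ha.mapsTo_pgf
    (fun y hy => ha.self_add_mul_sq_le_pgf haMeanSummable haMean hj hy) hx n
  subst hβ
  calc _ ≤ M * ∑ m ∈ Finset.range n, (1 - (pgf a)^[m] x) ^ 2 :=
        abs_log_Hgen_add_le hb hb0 hM (fun m => ha.mapsTo_pgf.iterate m hx) n
    _ ≤ M / a j := by rw [le_div_iff₀ haj]; nlinarith
    _ ≤ M / a j + 1 := le_add_of_nonneg_right zero_le_one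

theorem stmt14
    {Ω : Type} [MeasureSpace Ω] (hprob : IsProbabilityMeasure (ℙ : Measure Ω))
    (X : ℕ → ℕ → Ω → ℕ) (Y : ℕ → Ω → ℕ) (Z : ℕ → Ω → ℕ)
    (a b : ℕ → ℝ)
    (hXmeas : ∀ n i, Measurable (X n i)) (hYmeas : ∀ n, Measurable (Y n))
    (hXdist : ∀ n i j, (ℙ {ω | X n i ω = j}).toReal = a j)
    (hYdist : ∀ n j, (ℙ {ω | Y n ω = j}).toReal = b j)
    (hindep : iIndepFun
      (Sum.elim (fun p : ℕ × ℕ => X p.1 p.2) Y) ℙ)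
    (hZ0 : ∀ ω, Z 0 ω = 0)
    (hZrec : ∀ n ω, Z (n + 1) ω =
      (∑ i ∈ Finset.range (Z n ω), X (n + 1) (i + 1) ω) + Y (n + 1) ω)
    (ha0 : 0 < a 0) (ha01 : a 0 < 1) (hb0 : 0 < b 0) (hb01 : b 0 < 1)
    (haMoment : Summable (fun j : ℕ => a j * j ^ 2 * Real.log j))
    (hbMoment : Summable (fun j : ℕ => b j * j ^ 2))
    (haMeanSummable : Summable (fun j : ℕ => a j * j))
    (haMean : ∑' j : ℕ, a j * j = 1)
    (β γ σ : ℝ)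
    (hβ : β = ∑' j : ℕ, b j * j) (hβpos : 0 < β)
    (hγ : γ = (1 / 2) * ∑' j : ℕ, a j * ((j : ℝ) * ((j : ℝ) - 1)))
    (hγpos : 0 < γ)
    (hσ : σ = β / γ)
 :
    ∃ C : ℝ, 0 < C ∧ ∀ n : ℕ, 1 ≤ n → ∀ x : ℝ, 0 < x → x < 1 →
      |Real.log (Hgen a b n x) + β * ∑ m ∈ Finset.range n, (1 - (pgf a)^[m] x)| ≤ C :=
  stmt14_general hprob X Y a b hXmeas hYmeas hXdist hYdist hb0 hbMoment haMeanSummable haMean β γ hβ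
    hγ hγpos
end
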